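/- arXiv:1308.6614 — 7 statements merged into one kernel-verified Lean document; each statement's English description precedes it below -/
import Mathlib

section
/- Let μ be a finite positive measure on the unit circle 𝕋 with infinite support, let n ≥ 1, let φ_0,…,φ_{n−1} be polynomials with deg φ_j = j that are orthonormal in L²(μ) (∫_𝕋 φ_j·conj(φ_k) dμ = δ_{jk}), let Φ_n be the monic polynomial of degree n with ∫_𝕋 Φ_n(z)·conj(z^j) dμ(z) = 0 for j = 0,…,n−1, and set K_{n−1}(ξ,z) = Σ_{j=0}^{n−1} conj(φ_j(ξ))·φ_j(z). Suppose ξ_1,…,ξ_m ∈ 𝕋 are distinct points with m ≤ n satisfying K_{n−1}(ξ_j,ξ_l) = 0 for all j ≠ l, let m_1,…,m_m ≥ 0, and set η = μ + Σ_{k=1}^m m_k·δ_{ξ_k} (δ_{ξ} denoting the unit point mass at ξ). Then the polynomial Ψ(z) = Φ_n(z) − Σ_{k=1}^m [m_k·Φ_n(ξ_k)/(1 + m_k·K_{n−1}(ξ_k,ξ_k))]·K_{n−1}(ξ_k,z) is monic of degree n and satisfies ∫_𝕋 Ψ(z)·conj(z^j) dη(z) = 0 for j = 0,…,n−1; i.e.,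 Ψ is the n-th monic orthogonal polynomial of η. -/
/-!
Write `⟪p, q⟫ = ∫ p · conj q dμ` and `K_ξ = ∑_{j<n} conj (φ_j ξ) • φ_j`. The `φ_j` span the
polynomials of degree `< n`, so `K_ξ` reproduces them: `⟪q, K_ξ⟫ = q ξ`. With
`c_k = m_k Φ_n(ξ_k) / (1 + m_k K(ξ_k, ξ_k))` we have `Ψ = Φ_n - ∑ c_k K_{ξ_k}`, so for `q = z ^ j`
the `μ`-part of `∫ Ψ · conj q dη` is `-∑ c_k conj (q ξ_k)`. Because `K(ξ_l, ξ_k) = 0` for `l ≠ k`,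
`Ψ(ξ_k) = Φ_n(ξ_k) - c_k K(ξ_k, ξ_k)`, i.e. `m_k Ψ(ξ_k) = c_k`, so the point masses contribute
exactly `∑ c_k conj (q ξ_k)`. The correction has degree `< n`, hence `Ψ` stays monic of degree `n`.
-/

open MeasureTheory Polynomial ComplexConjugate

/-- A measure on `ℂ` is supported on the unit circle. -/
def OnCircle (μ : Measure ℂ) : Prop := μ {z : ℂ | ‖z‖ ≠ 1} = 0

open Submodule in
theorem Polynomial.span_image_Iio_eq_degreeLT {K : Type*} [Field K] {n : ℕ} {p : ℕ → K[X]}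
    (hp : ∀ j < n, (p j).degree = j) : span K (p '' Set.Iio n) = degreeLT K n := by
  let S : Sequence K := ⟨fun j => if j < n then p j else X ^ j, fun j => by
    split_ifs with h
    exacts [hp j h, degree_X_pow j]⟩
  have hS : S '' Set.Iio n = p '' Set.Iio n := Set.image_congr fun j hj => if_pos hj
  rw [← hS]
  exact S.span_degreeLT fun j _ => (leadingCoeff_ne_zero.2 (S.ne_zero j)).isUnit

theorem Polynomial.eval_sub_sum_C_mul_of_eval_eq_zero {R ι : Type*} [CommRing R] [Fintype ι]
    {Q : ι → R[X]} {x : ι → R} (hQ : ∀ l k, l ≠ k → (Q l).eval (x k) = 0) (p : R[X])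
    (c : ι → R) (k : ι) :
    (p - ∑ l, C (c l) * Q l).eval (x k) = p.eval (x k) - c k * (Q k).eval (x k) := by
  rw [eval_sub, eval_finsetSum, Finset.sum_eq_single k
    (fun l _ hl => by rw [eval_mul, hQ l k hl, mul_zero]) (by simp), eval_mul, eval_C]

theorem Polynomial.mul_eval_sub_sum_C_div_mul_of_eval_eq_zero {F ι : Type*} [Field F]
    [Fintype ι] {Q : ι → F[X]} {x : ι → F} (hQ : ∀ l k, l ≠ k → (Q l).eval (x k) = 0)
    (p : F[X]) (a : ι → F) {k : ι} (hk : 1 + a k * (Q k).eval (x k) ≠ 0) :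
    a k * (p - ∑ l, C (a l * p.eval (x l) / (1 + a l * (Q l).eval (x l))) * Q l).eval (x k) =
      a k * p.eval (x k) / (1 + a k * (Q k).eval (x k)) := by
  rw [eval_sub_sum_C_mul_of_eval_eq_zero hQ]
  field_simp
  ring

theorem MeasureTheory.integral_add_sum_smul_dirac {α E ι : Type*} [MeasurableSpace α]
    [MeasurableSingletonClass α] [NormedAddCommGroup E] [NormedSpace ℝ E] [CompleteSpace E]
    {μ : Measure α} {f : α → E} (hf : Integrable f μ) (s : Finset ι) (x : ι → α) {a : ι → ℝ}
    (ha : ∀ i ∈ s, 0 ≤ a i) :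
    ∫ y, f y ∂(μ + ∑ i ∈ s, ENNReal.ofReal (a i) • Measure.dirac (x i)) =
      ∫ y, f y ∂μ + ∑ i ∈ s, a i • f (x i) := by
  have hdirac : ∀ i ∈ s, Integrable f (ENNReal.ofReal (a i) • Measure.dirac (x i)) := fun i _ =>
    (integrable_dirac enorm_lt_top).smul_measure ENNReal.ofReal_ne_top
  rw [integral_add_measure hf (integrable_finsetSum_measure.2 hdirac),
    integral_finsetSum_measure hdirac]
  congr 1
  refine Finset.sum_congr rfl fun i hi => ?_
  rw [integral_smul_measure, integral_dirac, ENNReal.toReal_ofReal (ha i hi)]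

noncomputable def christoffelDarbouxKernel (φ : ℕ → ℂ[X]) (n : ℕ) (ξ : ℂ) : ℂ[X] :=
  ∑ j ∈ Finset.range n, C (conj ((φ j).eval ξ)) * φ j

section ChristoffelDarbouxKernel

variable (φ : ℕ → ℂ[X]) (n : ℕ) (ξ : ℂ)

theorem eval_christoffelDarbouxKernel (z : ℂ) :
    (christoffelDarbouxKernel φ n ξ).eval z =
      ∑ j ∈ Finset.range n, conj ((φ j).eval ξ) * (φ j).eval z := by
  simp [christoffelDarbouxKernel, eval_finsetSum]

theorem eval_christoffelDarbouxKernel_self :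
    (christoffelDarbouxKernel φ n ξ).eval ξ =
      ((∑ j ∈ Finset.range n, Complex.normSq ((φ j).eval ξ) : ℝ) : ℂ) := by
  simp [eval_christoffelDarbouxKernel, Complex.normSq_eq_conj_mul_self]

theorem one_add_mul_eval_christoffelDarbouxKernel_self_ne_zero {a : ℝ} (ha : 0 ≤ a) :
    1 + (a : ℂ) * (christoffelDarbouxKernel φ n ξ).eval ξ ≠ 0 := by
  rw [eval_christoffelDarbouxKernel_self]
  exact_mod_cast (add_pos_of_pos_of_nonneg one_pos
    (mul_nonneg ha (Finset.sum_nonneg fun _ _ => Complex.normSq_nonneg _))).ne'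

theorem christoffelDarbouxKernel_mem_span :
    christoffelDarbouxKernel φ n ξ ∈ Submodule.span ℂ (φ '' Set.Iio n) :=
  Submodule.sum_mem _ fun j hj => by
    rw [C_mul']
    exact Submodule.smul_mem _ _
      (Submodule.subset_span ⟨j, Set.mem_Iio.2 (Finset.mem_range.1 hj), rfl⟩)

end ChristoffelDarbouxKernel

namespace OnCircle

variable {μ : Measure ℂ} [IsFiniteMeasure μ]

theorem integrable_of_continuous (hμ : OnCircle μ) {f : ℂ → ℂ} (hf : Continuous f) :
    Integrable f μ := by
  have hae : ∀ᵐ z ∂μ, z ∈ Metric.sphere (0 : ℂ) 1 := by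
    rw [ae_iff]
    simpa [OnCircle] using hμ
  rw [← Measure.restrict_eq_self_of_ae_mem hae]
  exact hf.continuousOn.integrableOn_compact (isCompact_sphere 0 1)

theorem integrable_eval_mul_conj_eval (hμ : OnCircle μ) (p q : ℂ[X]) :
    Integrable (fun z => p.eval z * conj (q.eval z)) μ :=
  hμ.integrable_of_continuous <| p.continuous.mul (Complex.continuous_conj.comp q.continuous)

noncomputable def polyInner (hμ : OnCircle μ) : ℂ[X] →ₗ[ℂ] ℂ[X] →ₗ⋆[ℂ] ℂ :=
  LinearMap.mk₂'ₛₗ _ _ (fun p q => ∫ z, p.eval z * conj (q.eval z) ∂μ)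
    (fun p₁ p₂ q => by
      simp only [eval_add, add_mul]
      exact integral_add (hμ.integrable_eval_mul_conj_eval _ _)
        (hμ.integrable_eval_mul_conj_eval _ _))
    (fun a p q => by
      simp only [eval_smul, smul_eq_mul, mul_assoc, integral_const_mul, RingHom.id_apply])
    (fun p q₁ q₂ => by
      simp only [eval_add, map_add, mul_add]
      exact integral_add (hμ.integrable_eval_mul_conj_eval _ _)
        (hμ.integrable_eval_mul_conj_eval _ _))
    (fun a p q => by
      simp only [eval_smul, smul_eq_mul, map_mul, mul_left_comm _ (conj a), integral_const_mul])

variable (hμ : OnCircle μ)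

theorem polyInner_apply (p q : ℂ[X]) :
    hμ.polyInner p q = ∫ z, p.eval z * conj (q.eval z) ∂μ :=
  rfl

theorem conj_polyInner (p q : ℂ[X]) : conj (hμ.polyInner p q) = hμ.polyInner q p := by
  simp only [polyInner_apply, ← integral_conj, map_mul, Complex.conj_conj, mul_comm]

theorem span_image_Iio_eq_degreeLT {φ : ℕ → ℂ[X]} {n : ℕ} (hdeg : ∀ j < n, (φ j).natDegree = j)
    (hnorm : ∀ j < n, hμ.polyInner (φ j) (φ j) = 1) :
    Submodule.span ℂ (φ '' Set.Iio n) = degreeLT ℂ n := by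
  refine Polynomial.span_image_Iio_eq_degreeLT fun j hj => ?_
  have hφ_ne : φ j ≠ 0 := fun h => by simpa [h] using hnorm j hj
  rw [degree_eq_natDegree hφ_ne, hdeg j hj]

variable {φ : ℕ → ℂ[X]} {n : ℕ}
  (hφ : ∀ j < n, ∀ k < n, hμ.polyInner (φ j) (φ k) = if j = k then 1 else 0)
  {q : ℂ[X]} (hq : q ∈ Submodule.span ℂ (φ '' Set.Iio n)) (ξ : ℂ)
include hφ hq

theorem polyInner_christoffelDarbouxKernel :
    hμ.polyInner q (christoffelDarbouxKernel φ n ξ) = q.eval ξ := by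
  refine LinearMap.eqOn_span' (f := hμ.polyInner.flip (christoffelDarbouxKernel φ n ξ))
    (g := leval ξ) ?_ hq
  rintro _ ⟨i, hi, rfl⟩
  have hi : i < n := hi
  simp only [christoffelDarbouxKernel, C_mul', map_sum, LinearMap.map_smulₛₗ,
    RingHomCompTriple.comp_apply, RingHom.id_apply, LinearMap.coe_sum, LinearMap.coe_smul,
    Finset.sum_apply, Pi.smul_apply, LinearMap.flip_apply, smul_eq_mul, leval_apply]
  rw [Finset.sum_congr rfl fun j hj => by rw [hφ i hi j (Finset.mem_range.1 hj)]]
  simp [hi]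

theorem christoffelDarbouxKernel_polyInner :
    hμ.polyInner (christoffelDarbouxKernel φ n ξ) q = conj (q.eval ξ) := by
  rw [← hμ.conj_polyInner, hμ.polyInner_christoffelDarbouxKernel hφ hq]

end OnCircle

theorem add_masses_orthogonal_general (μ : Measure ℂ) [IsFiniteMeasure μ] (hcirc : OnCircle μ)
    (n : ℕ)
    (φ : ℕ → Polynomial ℂ)
    (hφdeg : ∀ j < n, (φ j).natDegree = j)
    (hφorth : ∀ j < n, ∀ k < n,
      ∫ z, (φ j).eval z * conj ((φ k).eval z) ∂μ = if j = k then 1 else 0)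
    (Φ : Polynomial ℂ) (hΦmonic : Φ.Monic) (hΦdeg : Φ.natDegree = n)
    (hΦorth : ∀ j < n, ∫ z, Φ.eval z * conj (z ^ j) ∂μ = 0)
    (m : ℕ) (ξ : Fin m → ℂ)
    (K : ℂ → ℂ → ℂ)
    (hK : ∀ x z : ℂ, K x z = ∑ j ∈ Finset.range n, conj ((φ j).eval x) * (φ j).eval z)
    (hKzero : ∀ j k : Fin m, j ≠ k → K (ξ j) (ξ k) = 0)
    (mass : Fin m → ℝ) (hmass : ∀ k, 0 ≤ mass k)
    (η : Measure ℂ)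
    (hη : η = μ + ∑ k : Fin m, (ENNReal.ofReal (mass k)) • Measure.dirac (ξ k))
    (Ψ : Polynomial ℂ)
    (hΨ : Ψ = Φ - ∑ k : Fin m,
      Polynomial.C ((mass k : ℂ) * Φ.eval (ξ k) / (1 + (mass k : ℂ) * K (ξ k) (ξ k))) *
        ∑ j ∈ Finset.range n, Polynomial.C (conj ((φ j).eval (ξ k))) * φ j) :
    Ψ.Monic ∧ Ψ.natDegree = n ∧ ∀ j < n, ∫ z, Ψ.eval z * conj (z ^ j) ∂η = 0 := by
  have hspan : Submodule.span ℂ (φ '' Set.Iio n) = degreeLT ℂ n :=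
    hcirc.span_image_Iio_eq_degreeLT hφdeg fun j hj => (hφorth j hj j hj).trans (if_pos rfl)
  set P := christoffelDarbouxKernel φ n
  have hKP : ∀ x z, K x z = (P x).eval z := fun x z => by
    rw [hK, eval_christoffelDarbouxKernel]
  set c : Fin m → ℂ := fun k => mass k * Φ.eval (ξ k) / (1 + mass k * (P (ξ k)).eval (ξ k))
  have hΨc : Ψ = Φ - ∑ k, C (c k) * P (ξ k) := by
    simp only [hΨ, hKP]
    rfl
  have hS_deg : (∑ k, C (c k) * P (ξ k)).degree < Φ.degree := by
    rw [degree_eq_natDegree hΦmonic.ne_zero, hΦdeg, ← mem_degreeLT, ← hspan]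
    refine Submodule.sum_mem _ fun k _ => ?_
    rw [C_mul']
    exact Submodule.smul_mem _ _ (christoffelDarbouxKernel_mem_span φ n (ξ k))
  refine ⟨hΨc ▸ hΦmonic.sub_of_left hS_deg, ?_, fun j hj => ?_⟩
  · rw [hΨc, natDegree_eq_of_degree_eq (degree_sub_eq_left_of_degree_lt hS_deg), hΦdeg]
  have hΨ_node : ∀ k, (mass k : ℂ) * Ψ.eval (ξ k) = c k := fun k => by
    rw [hΨc]
    exact mul_eval_sub_sum_C_div_mul_of_eval_eq_zero
      (fun l k hlk => (hKP _ _).symm.trans (hKzero l k hlk)) Φ (fun k => (mass k : ℂ))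
      (one_add_mul_eval_christoffelDarbouxKernel_self_ne_zero φ n (ξ k) (hmass k))
  have hX : (X ^ j : ℂ[X]) ∈ Submodule.span ℂ (φ '' Set.Iio n) := by
    rw [hspan, mem_degreeLT, degree_X_pow]
    exact_mod_cast hj
  have hΦ : hcirc.polyInner Φ (X ^ j) = 0 := by
    simpa only [OnCircle.polyInner_apply, eval_X_pow] using hΦorth j hj
  have hΨμ : hcirc.polyInner Ψ (X ^ j) = -∑ k, c k * conj (ξ k ^ j) := by
    simp [hΨc, C_mul', hΦ, hcirc.christoffelDarbouxKernel_polyInner hφorth hX, P]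
  have hint := hcirc.integrable_eval_mul_conj_eval Ψ (X ^ j)
  simp only [OnCircle.polyInner_apply, eval_X_pow] at hΨμ hint
  rw [hη, integral_add_sum_smul_dirac hint _ _ fun k _ => hmass k, hΨμ]
  simp only [Complex.real_smul, ← mul_assoc, hΨ_node, neg_add_cancel]

/-- adding point masses at points `ξ_k` on the circle at which the
Christoffel–Darboux kernel vanishes off-diagonally, the polynomial
`Ψ = Φ_n − Σ_k m_k Φ_n(ξ_k)/(1 + m_k K_{n−1}(ξ_k,ξ_k)) · K_{n−1}(ξ_k,·)`
is the `n`-th monic orthogonal polynomial of the new measure `η`. -/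
theorem add_masses_orthogonal (μ : Measure ℂ) [IsFiniteMeasure μ] (hcirc : OnCircle μ)
    (hsupp : {z : ℂ | ∀ ε > 0, 0 < μ (Metric.ball z ε)}.Infinite)
    (n : ℕ) (hn : 1 ≤ n)
    (φ : ℕ → Polynomial ℂ)
    (hφdeg : ∀ j < n, (φ j).natDegree = j)
    (hφorth : ∀ j < n, ∀ k < n,
      ∫ z, (φ j).eval z * conj ((φ k).eval z) ∂μ = if j = k then 1 else 0)
    (Φ : Polynomial ℂ) (hΦmonic : Φ.Monic) (hΦdeg : Φ.natDegree = n)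
    (hΦorth : ∀ j < n, ∫ z, Φ.eval z * conj (z ^ j) ∂μ = 0)
    (m : ℕ) (hm : m ≤ n) (ξ : Fin m → ℂ) (hξcirc : ∀ k, ‖ξ k‖ = 1)
    (hξinj : Function.Injective ξ)
    (K : ℂ → ℂ → ℂ)
    (hK : ∀ x z : ℂ, K x z = ∑ j ∈ Finset.range n, conj ((φ j).eval x) * (φ j).eval z)
    (hKzero : ∀ j k : Fin m, j ≠ k → K (ξ j) (ξ k) = 0)
    (mass : Fin m → ℝ) (hmass : ∀ k, 0 ≤ mass k)
    (η : Measure ℂ)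
    (hη : η = μ + ∑ k : Fin m, (ENNReal.ofReal (mass k)) • Measure.dirac (ξ k))
    (Ψ : Polynomial ℂ)
    (hΨ : Ψ = Φ - ∑ k : Fin m,
      Polynomial.C ((mass k : ℂ) * Φ.eval (ξ k) / (1 + (mass k : ℂ) * K (ξ k) (ξ k))) *
        ∑ j ∈ Finset.range n, Polynomial.C (conj ((φ j).eval (ξ k))) * φ j) :
    Ψ.Monic ∧ Ψ.natDegree = n ∧ ∀ j < n, ∫ z, Ψ.eval z * conj (z ^ j) ∂η = 0 :=
  add_masses_orthogonal_general μ hcirc n φ hφdeg hφorth Φ hΦmonic hΦdeg hΦorth m ξ K hK hKzero mass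
    hmass η hη Ψ hΨ
end

section
/- Let μ be a probability measure on the unit circle 𝕋 with infinite support, n ≥ 1, let Φ_n(·;μ) be the n-th monic orthogonal polynomial of μ, let φ_0,…,φ_n be orthonormal polynomials of μ, and let K_j(1,1) = Σ_{l=0}^{j} |φ_l(1)|². For t ∈ (0,1), set μ(t) = (1−t)·μ + t·δ_1. Then the n-th monic orthogonal polynomial Φ_n(·;μ(t)) of μ(t) satisfies ∫_𝕋 |Φ_n(z;μ(t))|² dμ(t)(z) = (∫_𝕋 |Φ_n(z;μ)|² dμ(z)) · (1−t) · (1 − t + t·K_n(1,1)) / (1 − t + t·K_{n−1}(1,1)). -/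
/-!
For `ν = s μ + t δ_w`, write `K(z) = ∑_{l<n} conj (φ_l(w)) φ_l(z)` for the reproducing kernel of
the polynomials of degree `< n` in `L²(μ)`. Then `Φ - a K` with
`a = t Φ(w) / (s + t K_{n-1}(w,w))` is monic of degree `n` and orthogonal to `z^j`, `j < n`,
in `L²(ν)`, so it is `Ψ`. Its norm is `⟨Ψ, z^n⟩_ν`, which the reproducing property evaluates to
`s (‖Φ‖² + t |Φ(w)|² / (s + t K_{n-1}(w,w)))`. Finally `Φ = ⟨Φ, φ_n⟩ φ_n` gives
`|Φ(w)|² = ‖Φ‖² |φ_n(w)|²`, and `K_n(w,w) = K_{n-1}(w,w) + |φ_n(w)|²`.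
-/

open MeasureTheory Polynomial ComplexConjugate

section Circle

variable {ν : Measure ℂ}

lemma OnCircle.ae_mem_sphere (hν : OnCircle ν) : ∀ᵐ z ∂ν, z ∈ Metric.sphere (0 : ℂ) 1 := by
  rw [ae_iff]
  simp only [mem_sphere_zero_iff_norm]
  exact hν

lemma OnCircle.integrable {E : Type*} [NormedAddCommGroup E] [IsFiniteMeasure ν]
    (hν : OnCircle ν) {f : ℂ → E} (hf : Continuous f) : Integrable f ν := by
  rw [← Measure.restrict_eq_self_of_ae_mem hν.ae_mem_sphere]
  exact hf.continuousOn.integrableOn_compact (isCompact_sphere 0 1)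

lemma OnCircle.smul_add_dirac (hν : OnCircle ν) (a b : ENNReal) {w : ℂ} (hw : ‖w‖ = 1) :
    OnCircle (a • ν + b • Measure.dirac w) := by
  have hs : MeasurableSet {z : ℂ | ‖z‖ ≠ 1} :=
    (isClosed_eq continuous_norm continuous_const).measurableSet.compl
  simp [OnCircle, Measure.dirac_apply' _ hs, hw, show ν {z : ℂ | ‖z‖ ≠ 1} = 0 from hν]

instance isFiniteMeasure_ofReal_smul [IsFiniteMeasure ν] (s : ℝ) :
    IsFiniteMeasure (ENNReal.ofReal s • ν) :=
  ν.smul_finite ENNReal.ofReal_ne_top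

lemma infinite_support_smul_add {ρ : Measure ℂ} {c : ENNReal} (hc : c ≠ 0)
    (h : {z : ℂ | ∀ ε > 0, 0 < ν (Metric.ball z ε)}.Infinite) :
    {z : ℂ | ∀ ε > 0, 0 < (c • ν + ρ) (Metric.ball z ε)}.Infinite :=
  h.mono fun _ hz ε hε =>
    (ENNReal.mul_pos hc (hz ε hε).ne').trans_le (Measure.le_add_right le_rfl _)

end Circle

lemma Polynomial.eq_zero_of_ae_eval_eq_zero {ν : Measure ℂ} {P : ℂ[X]}
    (hsupp : {z : ℂ | ∀ ε > 0, 0 < ν (Metric.ball z ε)}.Infinite)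
    (h : ∀ᵐ z ∂ν, P.eval z = 0) : P = 0 := by
  by_contra hP
  obtain ⟨z₀, hz₀supp, hz₀root⟩ := (hsupp.sdiff P.roots.toFinset.finite_toSet).nonempty
  have hz₀ : P.eval z₀ ≠ 0 := fun h0 => hz₀root (by simpa [hP] using h0)
  obtain ⟨ε, hε, hball⟩ := Metric.isOpen_iff.mp
    (isOpen_compl_singleton.preimage P.continuous) z₀ hz₀
  exact (hz₀supp ε hε).ne' (measure_mono_null hball (ae_iff.mp h))

noncomputable def polyInner (ν : Measure ℂ) (P Q : ℂ[X]) : ℂ :=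
  ∫ z, P.eval z * conj (Q.eval z) ∂ν

section PolyInner

variable {ν : Measure ℂ}

lemma conj_polyInner (P Q : ℂ[X]) : conj (polyInner ν P Q) = polyInner ν Q P := by
  simp only [polyInner, ← integral_conj, map_mul, Complex.conj_conj, mul_comm]

lemma polyInner_X_pow_right (P : ℂ[X]) (j : ℕ) :
    polyInner ν P (X ^ j) = ∫ z, P.eval z * conj (z ^ j) ∂ν := by
  simp [polyInner]

lemma polyInner_self (P : ℂ[X]) : polyInner ν P P = ((∫ z, ‖P.eval z‖ ^ 2 ∂ν : ℝ) : ℂ) := by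
  simp only [polyInner, Complex.mul_conj, Complex.normSq_eq_norm_sq]
  exact integral_ofReal

lemma polyInner_smul_left (a : ℂ) (P Q : ℂ[X]) :
    polyInner ν (a • P) Q = a * polyInner ν P Q := by
  simp only [polyInner, eval_smul, smul_eq_mul, mul_assoc, integral_const_mul]

lemma polyInner_smul_right (a : ℂ) (P Q : ℂ[X]) :
    polyInner ν P (a • Q) = conj a * polyInner ν P Q := by
  rw [← conj_polyInner, polyInner_smul_left, map_mul, conj_polyInner]

variable [IsFiniteMeasure ν]

lemma OnCircle.integrable_polyInner (hν : OnCircle ν) (P Q : ℂ[X]) :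
    Integrable (fun z => P.eval z * conj (Q.eval z)) ν :=
  hν.integrable (P.continuous.mul (Complex.continuous_conj.comp Q.continuous))

lemma polyInner_sub_left (hν : OnCircle ν) (P Q R : ℂ[X]) :
    polyInner ν (P - Q) R = polyInner ν P R - polyInner ν Q R := by
  simp only [polyInner, eval_sub, sub_mul]
  exact integral_sub (hν.integrable_polyInner P R) (hν.integrable_polyInner Q R)

lemma polyInner_sub_right (hν : OnCircle ν) (P Q R : ℂ[X]) :
    polyInner ν P (Q - R) = polyInner ν P Q - polyInner ν P R := by
  rw [← conj_polyInner, polyInner_sub_left hν, map_sub, conj_polyInner, conj_polyInner]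

lemma polyInner_sum_left (hν : OnCircle ν) {ι : Type*} (s : Finset ι) (P : ι → ℂ[X])
    (Q : ℂ[X]) : polyInner ν (∑ i ∈ s, P i) Q = ∑ i ∈ s, polyInner ν (P i) Q := by
  simp only [polyInner, eval_finsetSum, Finset.sum_mul]
  exact integral_finsetSum s fun i _ => hν.integrable_polyInner (P i) Q

lemma polyInner_sum_right (hν : OnCircle ν) {ι : Type*} (s : Finset ι) (P : ℂ[X])
    (Q : ι → ℂ[X]) : polyInner ν P (∑ i ∈ s, Q i) = ∑ i ∈ s, polyInner ν P (Q i) := by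
  rw [← conj_polyInner, polyInner_sum_left hν, map_sum]
  simp only [conj_polyInner]

lemma polyInner_smul_add_dirac (hν : OnCircle ν) {s t : ℝ} (hs : 0 ≤ s) (ht : 0 ≤ t)
    (w : ℂ) (P Q : ℂ[X]) :
    polyInner (ENNReal.ofReal s • ν + ENNReal.ofReal t • Measure.dirac w) P Q
      = s * polyInner ν P Q + t * (P.eval w * conj (Q.eval w)) := by
  have hdirac : Integrable (fun z => P.eval z * conj (Q.eval z)) (Measure.dirac w) :=
    integrable_dirac enorm_lt_top
  rw [polyInner, integral_add_measure
      ((hν.integrable_polyInner P Q).smul_measure ENNReal.ofReal_ne_top)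
      (hdirac.smul_measure ENNReal.ofReal_ne_top),
    integral_smul_measure, integral_smul_measure, integral_dirac,
    ENNReal.toReal_ofReal hs, ENNReal.toReal_ofReal ht, polyInner]
  simp only [Complex.real_smul]

end PolyInner

lemma Polynomial.eq_zero_of_polyInner_self_eq_zero {ν : Measure ℂ} [IsFiniteMeasure ν]
    (hν : OnCircle ν) (hsupp : {z : ℂ | ∀ ε > 0, 0 < ν (Metric.ball z ε)}.Infinite)
    {P : ℂ[X]} (h : polyInner ν P P = 0) : P = 0 := by
  rw [polyInner_self, Complex.ofReal_eq_zero] at h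
  have hae := (integral_eq_zero_iff_of_nonneg (fun _ => sq_nonneg _)
    (hν.integrable (P.continuous.norm.pow 2))).1 h
  exact eq_zero_of_ae_eval_eq_zero hsupp (hae.mono fun z hz => by simpa using hz)

namespace Polynomial.IsMonicOfDegree

variable {R : Type*} [Ring R] [Nontrivial R] {p q : R[X]} {n : ℕ}

lemma degree_sub_lt (hp : IsMonicOfDegree p n) (hq : IsMonicOfDegree q n) :
    (p - q).degree < n := by
  have hdeg : p.degree = n := by rw [degree_eq_natDegree hp.ne_zero, hp.natDegree_eq]
  have h := degree_sub_lt_left (hdeg.trans (by rw [degree_eq_natDegree hq.ne_zero,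
    hq.natDegree_eq])) hp.ne_zero (by rw [hp.leadingCoeff_eq, hq.leadingCoeff_eq])
  rwa [hdeg] at h

lemma sub_of_degree_lt (hp : IsMonicOfDegree p n) (hq : q.degree < n) :
    IsMonicOfDegree (p - q) n := by
  rw [isMonicOfDegree_iff]
  refine ⟨(natDegree_sub_le_of_le hp.natDegree_eq.le (natDegree_le_of_degree_le hq.le)).trans
    (max_self n).le, ?_⟩
  rw [coeff_sub, coeff_eq_zero_of_degree_lt hq, sub_zero, ← hp.natDegree_eq]
  exact hp.monic.coeff_natDegree

end Polynomial.IsMonicOfDegree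

structure IsMonicOrthogonal (ν : Measure ℂ) (n : ℕ) (P : ℂ[X]) : Prop
    extends IsMonicOfDegree P n where
  orthogonal : ∀ j < n, ∫ z, P.eval z * conj (z ^ j) ∂ν = 0

namespace IsMonicOrthogonal

variable {ν : Measure ℂ} [IsFiniteMeasure ν] {n : ℕ} {P Q : ℂ[X]}

lemma polyInner_eq_zero (hν : OnCircle ν) (hP : IsMonicOrthogonal ν n P)
    (hQ : Q.degree < n) : polyInner ν P Q = 0 := by
  rcases eq_or_ne Q 0 with rfl | hQ0
  · simp [polyInner]
  rw [Q.as_sum_range_C_mul_X_pow' ((natDegree_lt_iff_degree_lt hQ0).2 hQ),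
    polyInner_sum_right hν]
  refine Finset.sum_eq_zero fun j hj => ?_
  rw [← smul_eq_C_mul, polyInner_smul_right, polyInner_X_pow_right,
    hP.orthogonal j (Finset.mem_range.1 hj), mul_zero]

lemma polyInner_self_eq_polyInner_X_pow (hν : OnCircle ν) (hP : IsMonicOrthogonal ν n P) :
    polyInner ν P P = polyInner ν P (X ^ n) := by
  have h := hP.polyInner_eq_zero hν ((isMonicOfDegree_X_pow ℂ n).degree_sub_lt hP.toIsMonicOfDegree)
  rw [polyInner_sub_right hν, sub_eq_zero] at h
  exact h.symm

lemma unique (hν : OnCircle ν)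
    (hsupp : {z : ℂ | ∀ ε > 0, 0 < ν (Metric.ball z ε)}.Infinite)
    (hP : IsMonicOrthogonal ν n P) (hQ : IsMonicOrthogonal ν n Q) : P = Q := by
  have hPQ := hP.degree_sub_lt hQ.toIsMonicOfDegree
  refine sub_eq_zero.1 (eq_zero_of_polyInner_self_eq_zero hν hsupp ?_)
  rw [polyInner_sub_left hν, hP.polyInner_eq_zero hν hPQ, hQ.polyInner_eq_zero hν hPQ, sub_zero]

end IsMonicOrthogonal

lemma Polynomial.exists_eq_sum_smul_of_degree_lt {K : Type*} [Field K] {φ : ℕ → K[X]} {m : ℕ}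
    (hdeg : ∀ k < m, (φ k).natDegree = k) (hlead : ∀ k < m, (φ k).coeff k ≠ 0)
    {P : K[X]} (hP : P.degree < m) : ∃ c : ℕ → K, P = ∑ k ∈ Finset.range m, c k • φ k := by
  induction m generalizing P with
  | zero => exact ⟨0, by simpa using hP⟩
  | succ m ih =>
    set c := P.coeff m / (φ m).coeff m
    have hlt : (P - c • φ m).degree < m := by
      rw [degree_lt_iff_coeff_zero]
      intro i hi
      rcases hi.eq_or_lt with rfl | hi
      · simp [c, div_mul_cancel₀ _ (hlead m m.lt_succ_self)]
      · rw [coeff_sub, coeff_smul, coeff_eq_zero_of_degree_lt (hP.trans_le (by exact_mod_cast hi)),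
          coeff_eq_zero_of_natDegree_lt (by rwa [hdeg m m.lt_succ_self]), smul_zero, sub_zero]
    obtain ⟨b, hb⟩ := ih (fun k hk => hdeg k (hk.trans m.lt_succ_self))
      (fun k hk => hlead k (hk.trans m.lt_succ_self)) hlt
    refine ⟨Function.update b m c, ?_⟩
    rw [Finset.sum_range_succ, Function.update_self, Finset.sum_congr rfl fun k hk => by
      rw [Function.update_of_ne (Finset.mem_range.1 hk).ne], ← hb, sub_add_cancel]

structure IsOrthonormalUpTo (ν : Measure ℂ) (n : ℕ) (φ : ℕ → ℂ[X]) : Prop where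
  natDegree_eq : ∀ j ≤ n, (φ j).natDegree = j
  polyInner_eq : ∀ j ≤ n, ∀ k ≤ n, polyInner ν (φ j) (φ k) = if j = k then 1 else 0

/-- `reproducingKernel φ n w` and `kernelDiag φ n w` sum over `l < n`: they are the paper's
`K_{n-1}(·, w)` and `K_{n-1}(w, w)`. -/
noncomputable def reproducingKernel (φ : ℕ → ℂ[X]) (n : ℕ) (w : ℂ) : ℂ[X] :=
  ∑ l ∈ Finset.range n, conj ((φ l).eval w) • φ l

noncomputable def kernelDiag (φ : ℕ → ℂ[X]) (n : ℕ) (w : ℂ) : ℝ :=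
  ∑ l ∈ Finset.range n, ‖(φ l).eval w‖ ^ 2

lemma eval_reproducingKernel_self (φ : ℕ → ℂ[X]) (n : ℕ) (w : ℂ) :
    (reproducingKernel φ n w).eval w = kernelDiag φ n w := by
  simp [reproducingKernel, kernelDiag, eval_finsetSum, Complex.conj_mul']

lemma kernelDiag_nonneg (φ : ℕ → ℂ[X]) (n : ℕ) (w : ℂ) : 0 ≤ kernelDiag φ n w :=
  Finset.sum_nonneg fun _ _ => sq_nonneg _

lemma kernelDiag_succ (φ : ℕ → ℂ[X]) (n : ℕ) (w : ℂ) :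
    kernelDiag φ (n + 1) w = kernelDiag φ n w + ‖(φ n).eval w‖ ^ 2 :=
  Finset.sum_range_succ _ _

namespace IsOrthonormalUpTo

variable {ν : Measure ℂ} {n : ℕ} {φ : ℕ → ℂ[X]}

lemma coeff_self_ne_zero (hφ : IsOrthonormalUpTo ν n φ) {j : ℕ} (hj : j ≤ n) :
    (φ j).coeff j ≠ 0 := by
  have hne : φ j ≠ 0 := fun h0 => by
    simpa [h0, polyInner] using hφ.polyInner_eq j hj j hj
  simpa [leadingCoeff, hφ.natDegree_eq j hj] using leadingCoeff_ne_zero.2 hne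

lemma degree_lt (hφ : IsOrthonormalUpTo ν n φ) {j : ℕ} (hj : j < n) : (φ j).degree < n :=
  degree_le_natDegree.trans_lt (by rw [hφ.natDegree_eq j hj.le]; exact_mod_cast hj)

lemma degree_reproducingKernel_lt (hφ : IsOrthonormalUpTo ν n φ) (w : ℂ) :
    (reproducingKernel φ n w).degree < n := by
  rw [← mem_degreeLT]
  exact Submodule.sum_mem _ fun l hl =>
    Submodule.smul_mem _ _ (mem_degreeLT.2 (hφ.degree_lt (Finset.mem_range.1 hl)))

variable [IsFiniteMeasure ν]

lemma eq_sum_polyInner_smul (hν : OnCircle ν) (hφ : IsOrthonormalUpTo ν n φ) {m : ℕ}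
    (hm : m ≤ n + 1) {P : ℂ[X]} (hP : P.degree < m) :
    P = ∑ k ∈ Finset.range m, polyInner ν P (φ k) • φ k := by
  obtain ⟨c, hc⟩ := exists_eq_sum_smul_of_degree_lt
    (fun k hk => hφ.natDegree_eq k (by omega)) (fun k hk => hφ.coeff_self_ne_zero (by omega)) hP
  have hcoeff : ∀ k < m, polyInner ν P (φ k) = c k := fun k hk => by
    rw [hc, polyInner_sum_left hν, Finset.sum_eq_single_of_mem k (Finset.mem_range.2 hk)]
    · rw [polyInner_smul_left, hφ.polyInner_eq k (by omega) k (by omega), if_pos rfl, mul_one]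
    · intro j hj hjk
      rw [polyInner_smul_left, hφ.polyInner_eq j (by simp at hj; omega) k (by omega),
        if_neg hjk, mul_zero]
  calc P = ∑ k ∈ Finset.range m, c k • φ k := hc
    _ = _ := Finset.sum_congr rfl fun k hk => by rw [hcoeff k (Finset.mem_range.1 hk)]

lemma polyInner_reproducingKernel (hν : OnCircle ν) (hφ : IsOrthonormalUpTo ν n φ) (w : ℂ)
    {P : ℂ[X]} (hP : P.degree < n) : polyInner ν P (reproducingKernel φ n w) = P.eval w := by
  conv_rhs => rw [hφ.eq_sum_polyInner_smul hν n.le_succ hP]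
  simp [reproducingKernel, polyInner_sum_right hν, polyInner_smul_right, eval_finsetSum, mul_comm]

end IsOrthonormalUpTo

namespace IsMonicOrthogonal

variable {μ : Measure ℂ} [IsFiniteMeasure μ] {n : ℕ} {φ : ℕ → ℂ[X]} {Φ : ℂ[X]}

lemma eq_smul_orthonormal (hμ : OnCircle μ) (hφ : IsOrthonormalUpTo μ n φ)
    (hΦ : IsMonicOrthogonal μ n Φ) : Φ = polyInner μ Φ (φ n) • φ n := by
  have hdeg : Φ.degree < (n + 1 : ℕ) := by
    rw [degree_eq_natDegree hΦ.ne_zero, hΦ.natDegree_eq]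
    exact_mod_cast n.lt_succ_self
  conv_lhs => rw [hφ.eq_sum_polyInner_smul hμ le_rfl hdeg]
  rw [Finset.sum_range_succ, Finset.sum_eq_zero, zero_add]
  intro k hk
  rw [hΦ.polyInner_eq_zero hμ (hφ.degree_lt (Finset.mem_range.1 hk)), zero_smul]

lemma eval_mul_conj_eval (hμ : OnCircle μ) (hφ : IsOrthonormalUpTo μ n φ)
    (hΦ : IsMonicOrthogonal μ n Φ) (w : ℂ) :
    Φ.eval w * conj (Φ.eval w) = polyInner μ Φ Φ * ‖(φ n).eval w‖ ^ 2 := by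
  set c := polyInner μ Φ (φ n)
  have hΦφ := hΦ.eq_smul_orthonormal hμ hφ
  have hΦΦ : polyInner μ Φ Φ = c * conj c := by
    conv_lhs => rw [hΦφ]
    rw [polyInner_smul_left, polyInner_smul_right, hφ.polyInner_eq n le_rfl n le_rfl, if_pos rfl,
      mul_one]
  have hΦw : Φ.eval w = c * (φ n).eval w := by
    conv_lhs => rw [hΦφ]
    rw [eval_smul, smul_eq_mul]
  rw [hΦΦ, hΦw, map_mul, ← Complex.mul_conj' ((φ n).eval w)]
  ring

variable {s t : ℝ} {w a : ℂ}

lemma sub_smul_reproducingKernel (hμ : OnCircle μ) (hφ : IsOrthonormalUpTo μ n φ)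
    (hΦ : IsMonicOrthogonal μ n Φ) (hs : 0 ≤ s) (ht : 0 ≤ t)
    (ha : a * (s + t * kernelDiag φ n w) = t * Φ.eval w) :
    IsMonicOrthogonal (ENNReal.ofReal s • μ + ENNReal.ofReal t • Measure.dirac w) n
      (Φ - a • reproducingKernel φ n w) where
  toIsMonicOfDegree :=
    hΦ.sub_of_degree_lt ((degree_smul_le _ _).trans_lt (hφ.degree_reproducingKernel_lt w))
  orthogonal j hj := by
    have hXj : (X ^ j : ℂ[X]).degree < n := by rw [degree_X_pow]; exact_mod_cast hj
    have hKj : polyInner μ (reproducingKernel φ n w) (X ^ j) = conj (w ^ j) := by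
      rw [← conj_polyInner, hφ.polyInner_reproducingKernel hμ w hXj, eval_pow, eval_X]
    rw [← polyInner_X_pow_right, polyInner_smul_add_dirac hμ hs ht, polyInner_sub_left hμ,
      polyInner_smul_left, hKj, hΦ.polyInner_eq_zero hμ hXj]
    simp only [eval_sub, eval_smul, eval_reproducingKernel_self, smul_eq_mul, eval_pow, eval_X]
    linear_combination (-conj (w ^ j)) * ha

lemma polyInner_self_sub_smul_reproducingKernel (hμ : OnCircle μ)
    (hφ : IsOrthonormalUpTo μ n φ) (hΦ : IsMonicOrthogonal μ n Φ) (hs : 0 ≤ s) (ht : 0 ≤ t)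
    (hw : ‖w‖ = 1) (ha : a * (s + t * kernelDiag φ n w) = t * Φ.eval w) :
    polyInner (ENNReal.ofReal s • μ + ENNReal.ofReal t • Measure.dirac w)
        (Φ - a • reproducingKernel φ n w) (Φ - a • reproducingKernel φ n w)
      = s * (polyInner μ Φ Φ + a * conj (Φ.eval w)) := by
  have hKn : polyInner μ (reproducingKernel φ n w) (X ^ n) = conj (w ^ n - Φ.eval w) := by
    have h := hφ.polyInner_reproducingKernel hμ w
      ((isMonicOfDegree_X_pow ℂ n).degree_sub_lt hΦ.toIsMonicOfDegree)
    rw [polyInner_sub_left hμ, hΦ.polyInner_eq_zero hμ (hφ.degree_reproducingKernel_lt w),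
      sub_zero, eval_sub, eval_pow, eval_X] at h
    rw [← conj_polyInner, h]
  rw [(hΦ.sub_smul_reproducingKernel hμ hφ hs ht ha).polyInner_self_eq_polyInner_X_pow
      (hμ.smul_add_dirac _ _ hw), polyInner_smul_add_dirac hμ hs ht, polyInner_sub_left hμ,
    polyInner_smul_left, hKn, ← hΦ.polyInner_self_eq_polyInner_X_pow hμ]
  simp only [eval_sub, eval_smul, eval_reproducingKernel_self, smul_eq_mul, eval_pow, eval_X,
    map_sub]
  linear_combination (-conj (w ^ n)) * ha

lemma polyInner_self_smul_add_dirac (hμ : OnCircle μ)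
    (hsupp : {z : ℂ | ∀ ε > 0, 0 < μ (Metric.ball z ε)}.Infinite)
    (hφ : IsOrthonormalUpTo μ n φ) (hΦ : IsMonicOrthogonal μ n Φ) {Ψ : ℂ[X]}
    (hΨ : IsMonicOrthogonal (ENNReal.ofReal s • μ + ENNReal.ofReal t • Measure.dirac w) n Ψ)
    (hs : 0 < s) (ht : 0 ≤ t) (hw : ‖w‖ = 1) :
    polyInner (ENNReal.ofReal s • μ + ENNReal.ofReal t • Measure.dirac w) Ψ Ψ
      = s * polyInner μ Φ Φ * (s + t * kernelDiag φ (n + 1) w) / (s + t * kernelDiag φ n w) := by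
  have hd : (s + t * kernelDiag φ n w : ℂ) ≠ 0 := by
    exact_mod_cast (add_pos_of_pos_of_nonneg hs (mul_nonneg ht (kernelDiag_nonneg φ n w))).ne'
  set a := t * Φ.eval w / (s + t * kernelDiag φ n w)
  have ha : a * (s + t * kernelDiag φ n w) = t * Φ.eval w := div_mul_cancel₀ _ hd
  have hΨ_eq : Ψ = Φ - a • reproducingKernel φ n w :=
    hΨ.unique (hμ.smul_add_dirac _ _ hw)
      (infinite_support_smul_add (ENNReal.ofReal_pos.2 hs).ne' hsupp)
      (hΦ.sub_smul_reproducingKernel hμ hφ hs.le ht ha)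
  rw [hΨ_eq, hΦ.polyInner_self_sub_smul_reproducingKernel hμ hφ hs.le ht hw ha, div_mul_eq_mul_div,
    mul_assoc (t : ℂ), hΦ.eval_mul_conj_eval hμ hφ w, kernelDiag_succ]
  push_cast
  field_simp
  ring

end IsMonicOrthogonal

theorem norm_of_monic_after_mass_general (μ : Measure ℂ) [IsProbabilityMeasure μ]
    (hcirc : OnCircle μ)
    (hsupp : {z : ℂ | ∀ ε > 0, 0 < μ (Metric.ball z ε)}.Infinite)
    (n : ℕ)
    (φ : ℕ → Polynomial ℂ)
    (hφdeg : ∀ j ≤ n, (φ j).natDegree = j)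
    (hφorth : ∀ j ≤ n, ∀ k ≤ n,
      ∫ z, (φ j).eval z * conj ((φ k).eval z) ∂μ = if j = k then 1 else 0)
    (Φ : Polynomial ℂ) (hΦmonic : Φ.Monic) (hΦdeg : Φ.natDegree = n)
    (hΦorth : ∀ j < n, ∫ z, Φ.eval z * conj (z ^ j) ∂μ = 0)
    (t : ℝ) (ht : t ∈ Set.Ioo (0 : ℝ) 1)
    (μt : Measure ℂ)
    (hμt : μt = ENNReal.ofReal (1 - t) • μ + ENNReal.ofReal t • Measure.dirac (1 : ℂ))
    (Ψ : Polynomial ℂ) (hΨmonic : Ψ.Monic) (hΨdeg : Ψ.natDegree = n)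
    (hΨorth : ∀ j < n, ∫ z, Ψ.eval z * conj (z ^ j) ∂μt = 0) :
    ∫ z, ‖Ψ.eval z‖ ^ 2 ∂μt =
      (∫ z, ‖Φ.eval z‖ ^ 2 ∂μ) * (1 - t) *
        (1 - t + t * ∑ l ∈ Finset.range (n + 1), ‖(φ l).eval 1‖ ^ 2) /
        (1 - t + t * ∑ l ∈ Finset.range n, ‖(φ l).eval 1‖ ^ 2) := by
  subst hμt
  have key := IsMonicOrthogonal.polyInner_self_smul_add_dirac hcirc hsupp ⟨hφdeg, hφorth⟩
    ⟨⟨hΦdeg, hΦmonic⟩, hΦorth⟩ ⟨⟨hΨdeg, hΨmonic⟩, hΨorth⟩ (sub_pos.2 ht.2) ht.1.le norm_one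
  rw [polyInner_self, polyInner_self] at key
  rw [← Complex.ofReal_inj, key]
  push_cast [kernelDiag]
  ring

/-- for `μ(t) = (1−t)μ + t δ_1`, the `n`-th monic orthogonal polynomial
`Φ_n(·;μ(t))` of `μ(t)` satisfies
`‖Φ_n(·;μ(t))‖²_{μ(t)} = ‖Φ_n(·;μ)‖²_μ · (1−t)(1−t+tK_n(1,1))/(1−t+tK_{n−1}(1,1))`. -/
theorem norm_of_monic_after_mass (μ : Measure ℂ) [IsProbabilityMeasure μ]
    (hcirc : OnCircle μ)
    (hsupp : {z : ℂ | ∀ ε > 0, 0 < μ (Metric.ball z ε)}.Infinite)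
    (n : ℕ) (hn : 1 ≤ n)
    (φ : ℕ → Polynomial ℂ)
    (hφdeg : ∀ j ≤ n, (φ j).natDegree = j)
    (hφlead : ∀ j ≤ n, ∃ r : ℝ, 0 < r ∧ (φ j).coeff j = (r : ℂ))
    (hφorth : ∀ j ≤ n, ∀ k ≤ n,
      ∫ z, (φ j).eval z * conj ((φ k).eval z) ∂μ = if j = k then 1 else 0)
    (Φ : Polynomial ℂ) (hΦmonic : Φ.Monic) (hΦdeg : Φ.natDegree = n)
    (hΦorth : ∀ j < n, ∫ z, Φ.eval z * conj (z ^ j) ∂μ = 0)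
    (t : ℝ) (ht : t ∈ Set.Ioo (0 : ℝ) 1)
    (μt : Measure ℂ)
    (hμt : μt = ENNReal.ofReal (1 - t) • μ + ENNReal.ofReal t • Measure.dirac (1 : ℂ))
    (Ψ : Polynomial ℂ) (hΨmonic : Ψ.Monic) (hΨdeg : Ψ.natDegree = n)
    (hΨorth : ∀ j < n, ∫ z, Ψ.eval z * conj (z ^ j) ∂μt = 0) :
    ∫ z, ‖Ψ.eval z‖ ^ 2 ∂μt =
      (∫ z, ‖Φ.eval z‖ ^ 2 ∂μ) * (1 - t) *
        (1 - t + t * ∑ l ∈ Finset.range (n + 1), ‖(φ l).eval 1‖ ^ 2) /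
        (1 - t + t * ∑ l ∈ Finset.range n, ‖(φ l).eval 1‖ ^ 2) :=
  norm_of_monic_after_mass_general μ hcirc hsupp n φ hφdeg hφorth Φ hΦmonic hΦdeg hΦorth t ht μt hμt
    Ψ hΨmonic hΨdeg hΨorth
end

section
/- Let δ > 0 and n ∈ ℕ. Define the modified extremal quantity over all finite positive (not necessarily probability) measures μ on 𝕋 satisfying μ(A) ≥ (δ/(2π))·|A| for every Borel set A: \tilde{M}_{n,δ} = sup_μ ‖φ_n(·;μ)‖_{L^∞(𝕋)}. Then \tilde{M}_{n,δ} = √((n+1)/δ); that is, (i) every such μ satisfies ‖φ_n(·;μ)‖_{L^∞(𝕋)} ≤ √((n+1)/δ), and (ii) for every ε > 0 there exists such a measure μ with φ_n(1;μ) > √((n+1)/δ) − ε. -/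
/-!
Upper bound: `μ` dominates `(δ/2π)·arc`, so by Parseval `1 = ∫ |φ|² dμ ≥ δ ∑ |cₖ|²`, while
Cauchy–Schwarz gives `|φ(z)|² ≤ (n + 1) ∑ |cₖ|²` for `|z| ≤ 1`.

Sharpness: for `0 ≤ r < 1` add mass `t = δ r / (1 - r)` at each of the `n` nontrivial
`(n+1)`-th roots of unity `w`. There `q = zⁿ + r (1 + z + ⋯ + zⁿ⁻¹)` equals
`(1 - r) wⁿ = (1 - r) w̄`, so `⟨q, zʲ⟩ = δ r - t (1 - r) = 0` for `j < n` and
`‖q‖² = δ (1 + n r)`. Normalizing `q` gives `φₙ(1) = √((1 + n r) / δ)`, which tends to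
`√((n + 1) / δ)` as `r → 1`.
-/

open MeasureTheory Polynomial ComplexConjugate

/-- Arclength measure on the unit circle `{z : ℂ | |z| = 1}`, of total mass `2π`. -/
noncomputable def arcMeasure : Measure ℂ :=
  (volume.restrict (Set.Ioc (-Real.pi) Real.pi)).map (fun θ : ℝ => Complex.exp (Complex.I * θ))

/-- The Steklov-type density condition `μ(A) ≥ (δ/(2π))·|A|` for all Borel `A`
(no probability normalization). -/
def SteklovDensity (δ : ℝ) (μ : Measure ℂ) : Prop :=
  ∀ A : Set ℂ, MeasurableSet A →
    ENNReal.ofReal (δ / (2 * Real.pi)) * arcMeasure A ≤ μ A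

/-- `φ` is the `n`-th orthonormal polynomial of the measure `μ`. -/
def IsOrthonormalPoly (μ : Measure ℂ) (n : ℕ) (φ : Polynomial ℂ) : Prop :=
  φ.natDegree = n ∧ (∃ r : ℝ, 0 < r ∧ φ.coeff n = (r : ℂ)) ∧
    (∀ j < n, ∫ z, φ.eval z * conj (z ^ j) ∂μ = 0) ∧
    ∫ z, ‖φ.eval z‖ ^ 2 ∂μ = 1

open Complex Finset Filter Topology
open scoped Real

lemma measurable_exp_I_mul : Measurable fun θ : ℝ => exp (I * θ) := by fun_prop

instance : IsFiniteMeasure arcMeasure := by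
  unfold arcMeasure
  infer_instance

lemma integral_arcMeasure {E : Type*} [NormedAddCommGroup E] [NormedSpace ℝ E] {f : ℂ → E}
    (hf : Continuous f) : ∫ z, f z ∂arcMeasure = ∫ θ in -π..π, f (exp (I * θ)) := by
  rw [arcMeasure, integral_map measurable_exp_I_mul.aemeasurable hf.aestronglyMeasurable,
    intervalIntegral.integral_of_le (by linarith [Real.pi_pos])]

lemma Continuous.integrable_arcMeasure {E : Type*} [NormedAddCommGroup E] {f : ℂ → E}
    (hf : Continuous f) : Integrable f arcMeasure := by
  rw [arcMeasure, integrable_map_measure hf.aestronglyMeasurable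
    measurable_exp_I_mul.aemeasurable]
  exact (hf.comp (by fun_prop)).integrableOn_Ioc

lemma onCircle_arcMeasure : OnCircle arcMeasure := by
  rw [OnCircle, arcMeasure, Measure.map_apply measurable_exp_I_mul (by measurability)]
  simp [norm_exp]

lemma integral_exp_int_mul_mul_I (m : ℤ) :
    ∫ θ in -π..π, exp (↑(m * θ) * I) = if m = 0 then (2 * π : ℂ) else 0 := by
  split_ifs with hm
  · simp [hm, two_mul]
  · rw [intervalIntegral.integral_comp_mul_left (fun x : ℝ => exp (x * I)) (by exact_mod_cast hm),
      mul_neg, integral_exp_mul_I_eq_sin, Real.sin_int_mul_pi]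
    simp

lemma integral_arcMeasure_pow_mul_conj_pow (k j : ℕ) :
    ∫ z, z ^ k * conj (z ^ j) ∂arcMeasure = if k = j then (2 * π : ℂ) else 0 := by
  have hexp (θ : ℝ) : exp (I * θ) ^ k * conj (exp (I * θ) ^ j) = exp (↑((k - j : ℤ) * θ) * I) := by
    rw [map_pow, ← exp_conj, ← exp_nat_mul, ← exp_nat_mul, ← exp_add]
    congr 1
    simp only [map_mul, conj_I, conj_ofReal]
    push_cast
    ring
  rw [integral_arcMeasure (by fun_prop)]
  simp_rw [hexp, integral_exp_int_mul_mul_I, sub_eq_zero, Nat.cast_inj]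

lemma integral_arcMeasure_eval_mul_conj_pow (p : ℂ[X]) (j : ℕ) :
    ∫ z, p.eval z * conj (z ^ j) ∂arcMeasure = 2 * π * p.coeff j := by
  have hsum (z : ℂ) : p.eval z * conj (z ^ j) =
      ∑ k ∈ range (p.natDegree + 1), p.coeff k * (z ^ k * conj (z ^ j)) := by
    simp_rw [eval_eq_sum_range, sum_mul, mul_assoc]
  simp_rw [hsum]
  rw [integral_finsetSum _ fun k _ => (by fun_prop : Continuous _).integrable_arcMeasure,
    sum_congr rfl fun k _ => by rw [integral_const_mul, integral_arcMeasure_pow_mul_conj_pow,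
      mul_ite, mul_zero], sum_ite_eq']
  split_ifs with hj
  · ring
  · rw [coeff_eq_zero_of_natDegree_lt (by simpa [Nat.lt_succ_iff] using hj), mul_zero]

lemma integral_arcMeasure_norm_eval_sq (p : ℂ[X]) :
    ∫ z, ‖p.eval z‖ ^ 2 ∂arcMeasure = 2 * π * ∑ k ∈ range (p.natDegree + 1), ‖p.coeff k‖ ^ 2 := by
  have hsum (z : ℂ) : ((‖p.eval z‖ ^ 2 : ℝ) : ℂ) =
      ∑ k ∈ range (p.natDegree + 1), conj (p.coeff k) * (p.eval z * conj (z ^ k)) := by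
    push_cast
    rw [← mul_conj']
    nth_rw 2 [eval_eq_sum_range]
    rw [map_sum, mul_sum]
    refine sum_congr rfl fun k _ => ?_
    rw [map_mul]
    ring
  apply ofReal_injective
  rw [← integral_complex_ofReal]
  simp_rw [hsum]
  rw [integral_finsetSum _ fun k _ => (by fun_prop : Continuous _).integrable_arcMeasure]
  push_cast
  rw [mul_sum]
  refine sum_congr rfl fun k _ => ?_
  rw [integral_const_mul, integral_arcMeasure_eval_mul_conj_pow, ← mul_conj']
  ring

lemma SteklovDensity.smul_arcMeasure_le {δ : ℝ} {μ : Measure ℂ} (h : SteklovDensity δ μ) :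
    ENNReal.ofReal (δ / (2 * π)) • arcMeasure ≤ μ :=
  Measure.le_iff.2 h

lemma SteklovDensity.mul_sum_norm_coeff_sq_le {δ : ℝ} {μ : Measure ℂ} (h : SteklovDensity δ μ)
    (hδ : 0 ≤ δ) {p : ℂ[X]} (hp : Integrable (fun z => ‖p.eval z‖ ^ 2) μ) :
    δ * ∑ k ∈ range (p.natDegree + 1), ‖p.coeff k‖ ^ 2 ≤ ∫ z, ‖p.eval z‖ ^ 2 ∂μ := by
  have hmono := integral_mono_measure h.smul_arcMeasure_le
    (Eventually.of_forall fun z => sq_nonneg ‖p.eval z‖) hp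
  rw [integral_smul_measure, integral_arcMeasure_norm_eval_sq,
    ENNReal.toReal_ofReal (by positivity), smul_eq_mul] at hmono
  exact (le_of_eq (by field_simp)).trans hmono

lemma norm_eval_sq_le_of_norm_le_one (p : ℂ[X]) {z : ℂ} (hz : ‖z‖ ≤ 1) :
    ‖p.eval z‖ ^ 2 ≤ (p.natDegree + 1) * ∑ k ∈ range (p.natDegree + 1), ‖p.coeff k‖ ^ 2 := by
  have hnorm : ‖p.eval z‖ ≤ ∑ k ∈ range (p.natDegree + 1), ‖p.coeff k‖ := by
    rw [eval_eq_sum_range]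
    refine (norm_sum_le _ _).trans (sum_le_sum fun k _ => ?_)
    rw [norm_mul, norm_pow]
    exact mul_le_of_le_one_right (norm_nonneg _) (pow_le_one₀ (norm_nonneg _) hz)
  calc ‖p.eval z‖ ^ 2 ≤ (∑ k ∈ range (p.natDegree + 1), ‖p.coeff k‖) ^ 2 := by gcongr
    _ ≤ _ := by
      simpa using sq_sum_le_card_mul_sum_sq (s := range (p.natDegree + 1)) (f := (‖p.coeff ·‖))

theorem IsOrthonormalPoly.norm_eval_le {δ : ℝ} (hδ : 0 < δ) {μ : Measure ℂ}
    (hμ : SteklovDensity δ μ) {n : ℕ} {φ : ℂ[X]} (hφ : IsOrthonormalPoly μ n φ) {z : ℂ}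
    (hz : ‖z‖ ≤ 1) : ‖φ.eval z‖ ≤ √((n + 1) / δ) := by
  obtain ⟨rfl, -, -, hnorm⟩ := hφ
  have hint : Integrable (fun z => ‖φ.eval z‖ ^ 2) μ :=
    .of_integral_ne_zero (by rw [hnorm]; exact one_ne_zero)
  have hcoeff := hμ.mul_sum_norm_coeff_sq_le hδ.le hint
  rw [hnorm] at hcoeff
  refine Real.le_sqrt_of_sq_le ?_
  rw [le_div_iff₀ hδ]
  set S := ∑ k ∈ range (φ.natDegree + 1), ‖φ.coeff k‖ ^ 2
  calc ‖φ.eval z‖ ^ 2 * δ ≤ (φ.natDegree + 1) * S * δ := by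
        gcongr
        exact norm_eval_sq_le_of_norm_le_one φ hz
    _ = (φ.natDegree + 1) * (δ * S) := by ring
    _ ≤ φ.natDegree + 1 := mul_le_of_le_one_right (by positivity) hcoeff

section Atoms

variable {ι : Type*} (δ t : ℝ) (s : Finset ι) (w : ι → ℂ)

noncomputable def arcMeasureWithAtoms : Measure ℂ :=
  ENNReal.ofReal (δ / (2 * π)) • arcMeasure + ENNReal.ofReal t • ∑ i ∈ s, Measure.dirac (w i)

instance : IsFiniteMeasure (arcMeasureWithAtoms δ t s w) where
  measure_univ_lt_top := by
    simp [arcMeasureWithAtoms, ENNReal.mul_lt_top]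

variable {δ t s w}

lemma steklovDensity_arcMeasureWithAtoms : SteklovDensity δ (arcMeasureWithAtoms δ t s w) :=
  fun _ _ => le_add_right le_rfl

lemma onCircle_arcMeasureWithAtoms (hw : ∀ i ∈ s, ‖w i‖ = 1) :
    OnCircle (arcMeasureWithAtoms δ t s w) := by
  have hmeas : MeasurableSet {z : ℂ | ‖z‖ ≠ 1} := by measurability
  have hatoms : ∀ i ∈ s, Measure.dirac (w i) {z : ℂ | ‖z‖ ≠ 1} = 0 := fun i hi => by
    simp [Measure.dirac_apply' _ hmeas, hw i hi]
  have harc : arcMeasure {z : ℂ | ‖z‖ ≠ 1} = 0 := onCircle_arcMeasure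
  simp only [OnCircle, arcMeasureWithAtoms, Measure.add_apply, Measure.smul_apply,
    Measure.finsetSum_apply, harc, sum_eq_zero hatoms, smul_zero, add_zero]

lemma integral_arcMeasureWithAtoms {E : Type*} [NormedAddCommGroup E] [NormedSpace ℝ E]
    [CompleteSpace E] (hδ : 0 ≤ δ) (ht : 0 ≤ t) {f : ℂ → E} (hf : Continuous f) :
    ∫ z, f z ∂arcMeasureWithAtoms δ t s w =
      (δ / (2 * π)) • ∫ z, f z ∂arcMeasure + t • ∑ i ∈ s, f (w i) := by
  have hatoms : Integrable f (∑ i ∈ s, Measure.dirac (w i)) :=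
    integrable_finsetSum_measure.2 fun i _ => integrable_dirac enorm_lt_top
  rw [arcMeasureWithAtoms, integral_add_measure (hf.integrable_arcMeasure.smul_measure
      ENNReal.ofReal_ne_top) (hatoms.smul_measure ENNReal.ofReal_ne_top),
    integral_smul_measure, integral_smul_measure, integral_finsetSum_measure
      fun i _ => integrable_dirac enorm_lt_top, ENNReal.toReal_ofReal (by positivity),
    ENNReal.toReal_ofReal ht]
  simp_rw [integral_dirac]

end Atoms

lemma geom_sum_eq_zero_of_pow_eq_one {K : Type*} [Field K] {w : K} {k : ℕ} (h : w ^ k = 1)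
    (hw : w ≠ 1) : ∑ i ∈ range k, w ^ i = 0 := by
  rw [geom_sum_eq hw, h, sub_self, zero_div]

lemma sum_range_pow_succ_eq_neg_one {K : Type*} [Field K] {w : K} {n : ℕ}
    (h : w ^ (n + 1) = 1) (hw : w ≠ 1) : ∑ m ∈ range n, w ^ (m + 1) = -1 := by
  have hsum := geom_sum_eq_zero_of_pow_eq_one h hw
  rw [sum_range_succ'] at hsum
  linear_combination hsum

lemma conj_eq_pow_of_pow_succ_eq_one {w : ℂ} {n : ℕ} (h : w ^ (n + 1) = 1) : conj w = w ^ n := by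
  rw [← RCLike.inv_eq_conj (norm_eq_one_of_pow_eq_one h n.succ_ne_zero)]
  exact inv_eq_of_mul_eq_one_right (by rw [← pow_succ', h])

lemma Polynomial.Monic.isOrthonormalPoly_C_mul {μ : Measure ℂ} {n : ℕ} {q : ℂ[X]}
    (hq : q.Monic) (hdeg : q.natDegree = n)
    (horth : ∀ j < n, ∫ z, q.eval z * conj (z ^ j) ∂μ = 0) {N : ℝ} (hN : 0 < N)
    (hnorm : ∫ z, ‖q.eval z‖ ^ 2 ∂μ = N) :
    IsOrthonormalPoly μ n (C ((√N)⁻¹ : ℂ) * q) := by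
  have hc : ((√N)⁻¹ : ℂ) ≠ 0 := by simpa using (Real.sqrt_pos.2 hN).ne'
  refine ⟨by rw [natDegree_C_mul hc, hdeg], ⟨(√N)⁻¹, by positivity, ?_⟩, fun j hj => ?_, ?_⟩
  · rw [coeff_C_mul, ← hdeg, hq.coeff_natDegree, mul_one, ofReal_inv]
  · simp_rw [eval_mul, eval_C, mul_assoc]
    rw [integral_const_mul, horth j hj, mul_zero]
  · simp_rw [eval_mul, eval_C, norm_mul, mul_pow]
    rw [integral_const_mul, hnorm, norm_inv, norm_real, Real.norm_of_nonneg (by positivity),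
      inv_pow, Real.sq_sqrt hN.le, inv_mul_cancel₀ hN.ne']

noncomputable def extremalPoly (n : ℕ) (r : ℝ) : ℂ[X] := X ^ n + C (r : ℂ) * ∑ k ∈ range n, X ^ k

section ExtremalPoly

variable (n : ℕ) (r : ℝ)

lemma coeff_extremalPoly (k : ℕ) :
    (extremalPoly n r).coeff k = if k = n then 1 else if k < n then (r : ℂ) else 0 := by
  simp only [extremalPoly, coeff_add, coeff_X_pow, coeff_C_mul, finsetSum_coeff, sum_ite_eq,
    mem_range]
  split_ifs <;> first | omega | simp

lemma natDegree_extremalPoly : (extremalPoly n r).natDegree = n := by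
  refine natDegree_eq_of_le_of_coeff_ne_zero ((natDegree_le_iff_coeff_eq_zero).2 fun k hk => ?_)
    (by simp [coeff_extremalPoly])
  rw [coeff_extremalPoly, if_neg (by omega), if_neg (by omega)]

lemma monic_extremalPoly : (extremalPoly n r).Monic := by
  rw [Monic, leadingCoeff, natDegree_extremalPoly, coeff_extremalPoly, if_pos rfl]

lemma sum_norm_coeff_extremalPoly_sq :
    ∑ k ∈ range (n + 1), ‖(extremalPoly n r).coeff k‖ ^ 2 = 1 + n * r ^ 2 := by
  rw [sum_range_succ, coeff_extremalPoly, if_pos rfl,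
    sum_congr rfl fun k hk => by rw [coeff_extremalPoly, if_neg (mem_range.1 hk).ne,
      if_pos (mem_range.1 hk), norm_real, Real.norm_eq_abs, sq_abs], sum_const, card_range,
    nsmul_eq_mul, norm_one]
  ring

lemma eval_extremalPoly (z : ℂ) :
    (extremalPoly n r).eval z = z ^ n + r * ∑ k ∈ range n, z ^ k := by
  simp [extremalPoly, eval_finsetSum]

lemma eval_one_extremalPoly : (extremalPoly n r).eval 1 = 1 + n * r := by
  simp [eval_extremalPoly, mul_comm]

lemma eval_extremalPoly_of_pow_eq_one {w : ℂ} (h : w ^ (n + 1) = 1) (hw : w ≠ 1) :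
    (extremalPoly n r).eval w = (1 - r) * w ^ n := by
  have hsum := geom_sum_eq_zero_of_pow_eq_one h hw
  rw [sum_range_succ] at hsum
  rw [eval_extremalPoly]
  linear_combination r * hsum

end ExtremalPoly

noncomputable def extremalMeasure (δ r : ℝ) (n : ℕ) (ζ : ℂ) : Measure ℂ :=
  arcMeasureWithAtoms δ (δ * r / (1 - r)) (range n) fun m => ζ ^ (m + 1)

lemma IsPrimitiveRoot.pow_pow_eq_one {M : Type*} [CommMonoid M] {ζ : M} {k : ℕ}
    (hζ : IsPrimitiveRoot ζ k) (m : ℕ) : (ζ ^ m) ^ k = 1 := by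
  rw [pow_right_comm, hζ.pow_eq_one, one_pow]

section ExtremalMeasure

variable {n : ℕ} {ζ : ℂ} {δ r : ℝ}

lemma onCircle_extremalMeasure (hζ : IsPrimitiveRoot ζ (n + 1)) :
    OnCircle (extremalMeasure δ r n ζ) :=
  onCircle_arcMeasureWithAtoms fun _ _ =>
    norm_eq_one_of_pow_eq_one (hζ.pow_pow_eq_one _) n.succ_ne_zero

lemma eval_extremalPoly_pow_succ (hζ : IsPrimitiveRoot ζ (n + 1)) {m : ℕ} (hm : m < n) :
    (extremalPoly n r).eval (ζ ^ (m + 1)) = (1 - r) * conj (ζ ^ (m + 1)) := by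
  rw [eval_extremalPoly_of_pow_eq_one n r (hζ.pow_pow_eq_one _)
    (hζ.pow_ne_one_of_pos_of_lt m.succ_ne_zero (by omega)),
    conj_eq_pow_of_pow_succ_eq_one (hζ.pow_pow_eq_one _)]

lemma integral_extremalPoly_mul_conj_pow (hζ : IsPrimitiveRoot ζ (n + 1)) (hδ : 0 ≤ δ)
    (hr0 : 0 ≤ r) (hr1 : r < 1) {j : ℕ} (hj : j < n) :
    ∫ z, (extremalPoly n r).eval z * conj (z ^ j) ∂extremalMeasure δ r n ζ = 0 := by
  have hζ' : IsPrimitiveRoot (conj ζ) (n + 1) := hζ.map_of_injective (starRingEnd ℂ).injective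
  have hatom : ∀ m ∈ range n, (extremalPoly n r).eval (ζ ^ (m + 1)) * conj ((ζ ^ (m + 1)) ^ j)
      = (1 - r) * (conj ζ ^ (j + 1)) ^ (m + 1) := fun m hm => by
    rw [eval_extremalPoly_pow_succ hζ (mem_range.1 hm), mul_assoc, ← map_mul, ← pow_succ',
      map_pow, map_pow, pow_right_comm]
  rw [extremalMeasure, integral_arcMeasureWithAtoms hδ
      (div_nonneg (mul_nonneg hδ hr0) (by linarith)) (by fun_prop),
    integral_arcMeasure_eval_mul_conj_pow, coeff_extremalPoly, if_neg hj.ne, if_pos hj,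
    sum_congr rfl hatom, ← mul_sum, sum_range_pow_succ_eq_neg_one (hζ'.pow_pow_eq_one _)
      (hζ'.pow_ne_one_of_pos_of_lt j.succ_ne_zero (by omega))]
  have hr1' : (1 - r : ℂ) ≠ 0 := by exact_mod_cast (show 1 - r ≠ 0 by linarith)
  simp only [Complex.real_smul]
  push_cast
  field_simp
  ring

lemma integral_norm_eval_extremalPoly_sq (hζ : IsPrimitiveRoot ζ (n + 1)) (hδ : 0 ≤ δ)
    (hr0 : 0 ≤ r) (hr1 : r < 1) :
    ∫ z, ‖(extremalPoly n r).eval z‖ ^ 2 ∂extremalMeasure δ r n ζ = δ * (1 + n * r) := by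
  have hatom : ∀ m ∈ range n, ‖(extremalPoly n r).eval (ζ ^ (m + 1))‖ ^ 2 = (1 - r) ^ 2 :=
    fun m hm => by
      rw [eval_extremalPoly_pow_succ hζ (mem_range.1 hm), norm_mul, RCLike.norm_conj,
        norm_eq_one_of_pow_eq_one (hζ.pow_pow_eq_one _) n.succ_ne_zero, mul_one,
        ← ofReal_one, ← ofReal_sub, norm_real, Real.norm_eq_abs, sq_abs]
  rw [extremalMeasure, integral_arcMeasureWithAtoms hδ
      (div_nonneg (mul_nonneg hδ hr0) (by linarith)) (by fun_prop),
    integral_arcMeasure_norm_eval_sq, natDegree_extremalPoly, sum_norm_coeff_extremalPoly_sq,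
    sum_congr rfl hatom, sum_const, card_range, smul_eq_mul, smul_eq_mul, nsmul_eq_mul]
  have hr1' : 1 - r ≠ 0 := by linarith
  field_simp
  ring

end ExtremalMeasure

theorem exists_isOrthonormalPoly_norm_eval_one_eq {δ : ℝ} (hδ : 0 < δ) (n : ℕ) {r : ℝ}
    (hr0 : 0 ≤ r) (hr1 : r < 1) :
    ∃ μ : Measure ℂ, ∃ φ : ℂ[X], IsFiniteMeasure μ ∧ OnCircle μ ∧ SteklovDensity δ μ ∧
      IsOrthonormalPoly μ n φ ∧ ‖φ.eval 1‖ = √((1 + n * r) / δ) := by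
  obtain ⟨ζ, hζ⟩ : ∃ ζ : ℂ, IsPrimitiveRoot ζ (n + 1) :=
    ⟨_, isPrimitiveRoot_exp (n + 1) n.succ_ne_zero⟩
  have ha : 0 < 1 + n * r := by positivity
  refine ⟨extremalMeasure δ r n ζ, C ((√(δ * (1 + n * r)))⁻¹ : ℂ) * extremalPoly n r,
    by unfold extremalMeasure; infer_instance, onCircle_extremalMeasure hζ,
    steklovDensity_arcMeasureWithAtoms,
    (monic_extremalPoly n r).isOrthonormalPoly_C_mul (natDegree_extremalPoly n r)
      (fun j hj => integral_extremalPoly_mul_conj_pow hζ hδ.le hr0 hr1 hj) (by positivity)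
      (integral_norm_eval_extremalPoly_sq hζ hδ.le hr0 hr1), ?_⟩
  have heval : (C ((√(δ * (1 + n * r)))⁻¹ : ℂ) * extremalPoly n r).eval 1 =
      ((√(δ * (1 + n * r)))⁻¹ * (1 + n * r) : ℝ) := by
    rw [eval_mul, eval_C, eval_one_extremalPoly]
    push_cast
    ring
  rw [heval, norm_real, Real.norm_of_nonneg (by positivity), eq_comm,
    Real.sqrt_eq_iff_eq_sq (by positivity) (by positivity), mul_pow, inv_pow,
    Real.sq_sqrt (by positivity)]
  field_simp

/-- dropping the probability normalization, the extremal quantity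
`\tilde M_{n,δ}` equals `√((n+1)/δ)`: every admissible measure gives
`‖φ_n‖_{L^∞(𝕋)} ≤ √((n+1)/δ)`, and the value is approached arbitrarily closely. -/
theorem modified_extremal_value (δ : ℝ) (hδ : 0 < δ) (n : ℕ) :
    (∀ μ : Measure ℂ, IsFiniteMeasure μ → OnCircle μ → SteklovDensity δ μ →
      ∀ φ, IsOrthonormalPoly μ n φ →
        ∀ z : ℂ, ‖z‖ = 1 → ‖φ.eval z‖ ≤ Real.sqrt ((n + 1) / δ)) ∧
    (∀ ε > 0, ∃ μ : Measure ℂ, ∃ φ : Polynomial ℂ,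
      IsFiniteMeasure μ ∧ OnCircle μ ∧ SteklovDensity δ μ ∧ IsOrthonormalPoly μ n φ ∧
        Real.sqrt ((n + 1) / δ) - ε < ‖φ.eval 1‖) := by
  refine ⟨fun μ _ _ hμ φ hφ z hz => hφ.norm_eval_le hδ hμ hz.le, fun ε hε => ?_⟩
  have hlim : Tendsto (fun r : ℝ => √((1 + n * r) / δ)) (𝓝[<] 1) (𝓝 √((n + 1) / δ)) := by
    have hcont : Continuous fun r : ℝ => √((1 + n * r) / δ) := by fun_prop
    convert (hcont.tendsto 1).mono_left nhdsWithin_le_nhds using 3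
    ring
  obtain ⟨r, hr, hr0, hr1⟩ :=
    ((hlim.eventually (lt_mem_nhds (sub_lt_self _ hε))).and (Ioo_mem_nhdsLT zero_lt_one)).exists
  obtain ⟨μ, φ, hfin, hcirc, hμ, hφ, heval⟩ :=
    exists_isOrthonormalPoly_norm_eval_one_eq hδ n hr0.le hr1
  exact ⟨μ, φ, hfin, hcirc, hμ, hφ, heval ▸ hr⟩
end

section
/- Let P be a polynomial with complex coefficients of degree n ≥ 1 all of whose roots lie in the open unit disc 𝔻 = {z : |z| < 1}, and let P*(z) = z^n·conj(P(1/conj(z))) be its n-th reciprocal (if P = Σ_{j=0}^n p_j z^j then P* = Σ_{j=0}^n conj(p_{n−j}) z^j). Then every root of the polynomial D(z) = P(z) + P*(z) lies on the unit circle {z : |z| = 1}. -/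
/-!
Factor `P = c ∏ (X - rᵢ)`; then `P* = conj c ∏ (1 - conj rᵢ X)`. For each root `r` of `P`, the
identity `‖1 - conj r z‖² - ‖z - r‖² = (1 - ‖z‖²)(1 - ‖r‖²)` shows that `‖P(z)‖ < ‖P*(z)‖` inside
the unit disc and `‖P*(z)‖ < ‖P(z)‖` outside its closure, whereas a root of `P + P*` has
`‖P(z)‖ = ‖P*(z)‖`.
-/

open Polynomial

noncomputable def starTransform (P : Polynomial ℂ) : Polynomial ℂ :=
  (P.map (starRingEnd ℂ)).reverse

namespace Polynomial

variable {R : Type*}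

lemma reverse_one [Semiring R] : (1 : R[X]).reverse = 1 := by
  simpa using reverse_C (1 : R)

lemma reverse_X_sub_C [Ring R] (a : R) : (X - C a).reverse = 1 - C a * X := by
  nontriviality R
  rw [sub_eq_add_neg, ← C_neg, reverse_add_C, natDegree_X, ← mul_one X, reverse_X_mul,
    reverse_one]
  simp [sub_eq_add_neg]

lemma reverse_multiset_prod [CommSemiring R] [NoZeroDivisors R] (s : Multiset R[X]) :
    s.prod.reverse = (s.map reverse).prod := by
  induction s using Multiset.induction with
  | empty => simp [reverse_one]
  | cons p s ih => simp [reverse_mul_of_domain, ih]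

end Polynomial

lemma Multiset.prod_map_lt_prod_map_of_nonneg {R ι : Type*} [CommSemiring R] [PartialOrder R]
    [IsStrictOrderedRing R] {s : Multiset ι} (hs : s ≠ 0) {f g : ι → R}
    (h0 : ∀ i ∈ s, 0 ≤ f i) (h : ∀ i ∈ s, f i < g i) :
    (s.map f).prod < (s.map g).prod := by
  by_cases hpos : ∀ i ∈ s, 0 < f i
  · exact prod_map_lt_prod_map hs f g hpos h
  push Not at hpos
  obtain ⟨i, hi, hfi⟩ := hpos
  have hfi : f i = 0 := (h0 i hi).eq_of_not_lt hfi |>.symm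
  rw [prod_eq_zero (hfi ▸ mem_map_of_mem f hi)]
  exact prod_pos fun _ hg => by
    obtain ⟨j, hj, rfl⟩ := mem_map.1 hg
    exact (h0 j hj).trans_lt (h j hj)

open ComplexConjugate

namespace Complex

lemma sq_norm_one_sub_conj_mul_sub_sq_norm_sub (z r : ℂ) :
    ‖1 - conj r * z‖ ^ 2 - ‖z - r‖ ^ 2 = (1 - ‖z‖ ^ 2) * (1 - ‖r‖ ^ 2) := by
  simp only [Complex.sq_norm, normSq_apply, sub_re, sub_im, mul_re, mul_im, conj_re, conj_im,
    one_re, one_im]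
  ring

lemma norm_sub_lt_norm_one_sub_conj_mul {z r : ℂ} (hz : ‖z‖ < 1) (hr : ‖r‖ < 1) :
    ‖z - r‖ < ‖1 - conj r * z‖ := by
  have hid := sq_norm_one_sub_conj_mul_sub_sq_norm_sub z r
  have hpos : 0 < (1 - ‖z‖ ^ 2) * (1 - ‖r‖ ^ 2) :=
    mul_pos (by nlinarith [norm_nonneg z]) (by nlinarith [norm_nonneg r])
  exact lt_of_pow_lt_pow_left₀ 2 (norm_nonneg _) (by linarith)

lemma norm_one_sub_conj_mul_lt_norm_sub {z r : ℂ} (hz : 1 < ‖z‖) (hr : ‖r‖ < 1) :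
    ‖1 - conj r * z‖ < ‖z - r‖ := by
  have hid := sq_norm_one_sub_conj_mul_sub_sq_norm_sub z r
  have hneg : (1 - ‖z‖ ^ 2) * (1 - ‖r‖ ^ 2) < 0 :=
    mul_neg_of_neg_of_pos (by nlinarith) (by nlinarith [norm_nonneg r])
  exact lt_of_pow_lt_pow_left₀ 2 (norm_nonneg _) (by linarith)

end Complex

lemma starTransform_eq_prod_roots (P : ℂ[X]) :
    starTransform P =
      C (conj P.leadingCoeff) * (P.roots.map fun r => 1 - C (conj r) * X).prod := by
  conv_lhs => rw [(IsAlgClosed.splits P).eq_prod_roots]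
  simp [starTransform, Polynomial.map_multiset_prod, reverse_mul_of_domain, reverse_multiset_prod,
    Multiset.map_map, reverse_X_sub_C]

lemma norm_eval_eq_prod_roots (P : ℂ[X]) (z : ℂ) :
    ‖P.eval z‖ = ‖P.leadingCoeff‖ * (P.roots.map fun r => ‖z - r‖).prod := by
  rw [(IsAlgClosed.splits P).eval_eq_prod_roots, norm_mul,
    ← normHom_apply (Multiset.prod _), map_multiset_prod, Multiset.map_map]
  rfl

lemma norm_eval_starTransform_eq_prod_roots (P : ℂ[X]) (z : ℂ) :
    ‖(starTransform P).eval z‖ =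
      ‖P.leadingCoeff‖ * (P.roots.map fun r => ‖1 - conj r * z‖).prod := by
  rw [starTransform_eq_prod_roots, eval_mul, eval_C, eval_multiset_prod, norm_mul,
    Complex.norm_conj, ← normHom_apply (Multiset.prod _), map_multiset_prod, Multiset.map_map,
    Multiset.map_map]
  simp [Function.comp_def]

lemma norm_eval_lt_norm_eval_starTransform {P : ℂ[X]} (hP : P.roots ≠ 0)
    (hroots : ∀ r ∈ P.roots, ‖r‖ < 1) {z : ℂ} (hz : ‖z‖ < 1) :
    ‖P.eval z‖ < ‖(starTransform P).eval z‖ := by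
  have hc : 0 < ‖P.leadingCoeff‖ := by simpa using fun h : P = 0 => hP (by simp [h])
  rw [norm_eval_eq_prod_roots, norm_eval_starTransform_eq_prod_roots]
  exact mul_lt_mul_of_pos_left (Multiset.prod_map_lt_prod_map_of_nonneg hP
    (fun _ _ => norm_nonneg _)
    fun r hr => Complex.norm_sub_lt_norm_one_sub_conj_mul hz (hroots r hr)) hc

lemma norm_eval_starTransform_lt_norm_eval {P : ℂ[X]} (hP : P.roots ≠ 0)
    (hroots : ∀ r ∈ P.roots, ‖r‖ < 1) {z : ℂ} (hz : 1 < ‖z‖) :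
    ‖(starTransform P).eval z‖ < ‖P.eval z‖ := by
  have hc : 0 < ‖P.leadingCoeff‖ := by simpa using fun h : P = 0 => hP (by simp [h])
  rw [norm_eval_eq_prod_roots P, norm_eval_starTransform_eq_prod_roots]
  exact mul_lt_mul_of_pos_left (Multiset.prod_map_lt_prod_map_of_nonneg hP
    (fun _ _ => norm_nonneg _)
    fun r hr => Complex.norm_one_sub_conj_mul_lt_norm_sub hz (hroots r hr)) hc

/-- if all roots of `P` (of degree `n ≥ 1`) lie in the open unit disc,
then every root of `D = P + P*` lies on the unit circle. -/
theorem roots_of_sum_with_reciprocal_on_circle (P : Polynomial ℂ) (n : ℕ) (hn : 1 ≤ n)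
    (hdeg : P.natDegree = n)
    (hroots : ∀ z : ℂ, P.eval z = 0 → ‖z‖ < 1) :
    ∀ z : ℂ, (P + starTransform P).eval z = 0 → ‖z‖ = 1 := by
  intro z hz
  have hne : P.roots ≠ 0 := by
    rw [← Multiset.card_pos, IsAlgClosed.card_roots_eq_natDegree]
    omega
  have hroots' : ∀ r ∈ P.roots, ‖r‖ < 1 := fun r hr => hroots r (mem_roots'.1 hr).2
  have hnorm : ‖P.eval z‖ = ‖(starTransform P).eval z‖ := by
    rw [eval_add, add_eq_zero_iff_eq_neg] at hz
    rw [hz, norm_neg]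
  rcases lt_trichotomy ‖z‖ 1 with hlt | hone | hgt
  · exact absurd hnorm (norm_eval_lt_norm_eval_starTransform hne hroots' hlt).ne
  · exact hone
  · exact absurd hnorm (norm_eval_starTransform_lt_norm_eval hne hroots' hgt).ne'
end

section
/- For every a > 0 the following hold: (i) if γ ∈ [1/2, 1) then ∫₀ᵃ (cos x)/x^γ dx > 0; (ii) if γ ∈ (0,1) then ∫₀ᵃ (sin x)/x^γ dx > 0; (iii) if γ ∈ (0,1) then the improper integral ∫₀^∞ (sin x)/x^γ dx (understood as the limit of ∫₀ᵃ as a → ∞, which exists) is strictly positive. -/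
/-!
The sine integrals are treated for an arbitrary nonnegative decreasing weight `f`. Pairing
`x ∈ [2kπ, 2kπ + π]` with `x + π`, where `sin` changes sign and `f` has decreased, shows
`∫₀ᵃ sin x f x ≥ 0`. Splitting at `π / 2` and `π` improves this to the lower bound
`f (π / 2) - f π` for `a ≥ π`, which is positive for strictly decreasing `f` and survives the limit
`a → ∞`; for `f x = x ^ (-γ)` the limit exists by integrating by parts on `[π, a]`.

For the cosine, integrating by parts gives
`∫₀ᵃ cos x x^(-γ) = sin a a^(-γ) + γ ∫₀ᵃ sin x x^(-γ-1)`, whose last term is positive. When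
`sin a < 0`, so that `a > π`, Jordan's inequality on `[0, π / 2]` bounds that term below by
`π^(-γ) > |sin a| a^(-γ)`, provided `γ ≥ 1 / 2`.
-/

open MeasureTheory Real Set Filter Topology

-- Integrability is asked of `sin x * f x` only, since `f` may blow up at `0` too fast to be
-- integrable itself (e.g. `x ^ (-3 / 2)`).
structure IsSinWeight (f : ℝ → ℝ) : Prop where
  antitoneOn : AntitoneOn f (Ioi 0)
  nonneg : ∀ ⦃x⦄, 0 < x → 0 ≤ f x
  intervalIntegrable : ∀ ⦃b⦄, 0 ≤ b → IntervalIntegrable (fun x => sin x * f x) volume 0 b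

lemma mul_sub_cos_le_integral_sin_mul {f : ℝ → ℝ} {u v c : ℝ} (huv : u ≤ v)
    (hint : IntervalIntegrable (fun x => sin x * f x) volume u v)
    (h : ∀ x ∈ Icc u v, c * sin x ≤ sin x * f x) :
    c * (cos u - cos v) ≤ ∫ x in u..v, sin x * f x := by
  rw [← integral_sin, ← intervalIntegral.integral_const_mul]
  exact intervalIntegral.integral_mono_on huv
    ((continuous_sin.intervalIntegrable u v).const_mul c) hint h

lemma integral_two_pi_sin_mul (f : ℝ → ℝ) (a : ℝ) :
    ∫ x in 2 * π..a, sin x * f x = ∫ x in 0..a - 2 * π, sin x * f (x + 2 * π) := by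
  simpa [sin_add_two_pi] using
    (intervalIntegral.integral_comp_add_right (fun x => sin x * f x) (2 * π)
      (a := 0) (b := a - 2 * π)).symm

namespace IsSinWeight

variable {f : ℝ → ℝ} {a : ℝ}

lemma intervalIntegrable_of_nonneg (hf : IsSinWeight f) {u v : ℝ} (hu : 0 ≤ u) (hv : 0 ≤ v) :
    IntervalIntegrable (fun x => sin x * f x) volume u v :=
  (hf.intervalIntegrable hu).symm.trans (hf.intervalIntegrable hv)

lemma comp_add_two_pi (hf : IsSinWeight f) : IsSinWeight (fun x => f (x + 2 * π)) where
  antitoneOn x hx y hy hxy :=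
    hf.antitoneOn (add_pos hx two_pi_pos) (add_pos hy two_pi_pos) (by linarith)
  nonneg x hx := hf.nonneg (by positivity)
  intervalIntegrable b hb := by
    simpa [sin_add_two_pi] using
      (hf.intervalIntegrable_of_nonneg two_pi_pos.le (by positivity : 0 ≤ b + 2 * π)).comp_add_right
        (2 * π)

lemma sin_mul_nonneg (hf : IsSinWeight f) {x : ℝ} (hx : 0 ≤ x) (hs : 0 ≤ sin x) :
    0 ≤ sin x * f x := by
  rcases hx.eq_or_lt with rfl | hx
  · simp
  · exact mul_nonneg hs (hf.nonneg hx)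

lemma integral_two_pi_nonneg (hf : IsSinWeight f) : 0 ≤ ∫ x in 0..2 * π, sin x * f x := by
  have hπ := pi_pos
  have hpair : IntervalIntegrable (fun x => -(sin x * f (x + π))) volume 0 π := by
    simpa [sin_add_pi, two_mul] using
      (hf.intervalIntegrable_of_nonneg hπ.le two_pi_pos.le).comp_add_right π
  have hshift : ∫ x in π..2 * π, sin x * f x = ∫ x in 0..π, -(sin x * f (x + π)) := by
    simpa [sin_add_pi, two_mul] using
      (intervalIntegral.integral_comp_add_right (fun x => sin x * f x) π (a := 0) (b := π)).symm
  rw [← intervalIntegral.integral_add_adjacent_intervals (b := π) (hf.intervalIntegrable hπ.le)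
    (hf.intervalIntegrable_of_nonneg hπ.le two_pi_pos.le), hshift,
    ← intervalIntegral.integral_add (hf.intervalIntegrable hπ.le) hpair]
  refine intervalIntegral.integral_nonneg hπ.le fun x hx => ?_
  rcases hx.1.eq_or_lt with rfl | hx0
  · simp
  · have hs : 0 ≤ sin x := sin_nonneg_of_nonneg_of_le_pi hx.1 hx.2
    have hfx : f (x + π) ≤ f x := hf.antitoneOn hx0 (add_pos hx0 hπ) (by linarith)
    nlinarith

lemma integral_nonneg_of_le_two_pi (hf : IsSinWeight f) (ha0 : 0 ≤ a) (ha : a ≤ 2 * π) :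
    0 ≤ ∫ x in 0..a, sin x * f x := by
  rcases le_or_gt a π with hπa | hπa
  · exact intervalIntegral.integral_nonneg ha0 fun x hx =>
      hf.sin_mul_nonneg hx.1 (sin_nonneg_of_nonneg_of_le_pi hx.1 (hx.2.trans hπa))
  have htail : ∫ x in a..2 * π, sin x * f x ≤ 0 := by
    rw [← neg_nonneg, ← intervalIntegral.integral_neg]
    refine intervalIntegral.integral_nonneg ha fun x hx => ?_
    have hs : sin x ≤ 0 := by
      rw [← sin_sub_two_pi]
      exact sin_nonpos_of_nonpos_of_neg_pi_le (by linarith [hx.2]) (by linarith [hx.1])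
    have := hf.nonneg (by linarith [hx.1, pi_pos] : 0 < x)
    nlinarith
  have := intervalIntegral.integral_add_adjacent_intervals (hf.intervalIntegrable ha0)
    (hf.intervalIntegrable_of_nonneg ha0 two_pi_pos.le)
  linarith [hf.integral_two_pi_nonneg]

theorem integral_nonneg (hf : IsSinWeight f) (ha : 0 ≤ a) : 0 ≤ ∫ x in 0..a, sin x * f x := by
  obtain ⟨n, hn⟩ := exists_nat_ge (a / (2 * π))
  rw [div_le_iff₀ two_pi_pos] at hn
  induction n generalizing f a with
  | zero => simp [le_antisymm (by simpa using hn) ha]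
  | succ n ih =>
    rcases le_total a (2 * π) with h | h
    · exact hf.integral_nonneg_of_le_two_pi ha h
    rw [← intervalIntegral.integral_add_adjacent_intervals (hf.intervalIntegrable two_pi_pos.le)
      (hf.intervalIntegrable_of_nonneg two_pi_pos.le ha), integral_two_pi_sin_mul]
    refine add_nonneg (hf.integral_nonneg_of_le_two_pi two_pi_pos.le le_rfl)
      (ih hf.comp_add_two_pi (sub_nonneg.2 h) ?_)
    push_cast at hn
    linarith

lemma neg_two_mul_le_integral_pi (hf : IsSinWeight f) (ha : π ≤ a) :
    -(2 * f π) ≤ ∫ x in π..a, sin x * f x := by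
  have hπ := pi_pos
  have hfπ := hf.nonneg hπ
  have first_period : ∀ b, π ≤ b → b ≤ 2 * π → -(2 * f π) ≤ ∫ x in π..b, sin x * f x := by
    intro b hb hb'
    refine le_trans ?_ (mul_sub_cos_le_integral_sin_mul (c := f π) hb
      (hf.intervalIntegrable_of_nonneg hπ.le (hπ.le.trans hb)) fun x hx => ?_)
    · rw [cos_pi]
      nlinarith [mul_nonneg hfπ (sub_nonneg.2 (cos_le_one b))]
    · have hs : sin x ≤ 0 := by
        rw [← sin_sub_two_pi]
        exact sin_nonpos_of_nonpos_of_neg_pi_le (by linarith [hx.2]) (by linarith [hx.1])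
      have hfx : f x ≤ f π := hf.antitoneOn hπ (hπ.trans_le hx.1) hx.1
      nlinarith
  rcases le_total a (2 * π) with h | h
  · exact first_period a ha h
  rw [← intervalIntegral.integral_add_adjacent_intervals (b := 2 * π)
    (hf.intervalIntegrable_of_nonneg hπ.le two_pi_pos.le)
    (hf.intervalIntegrable_of_nonneg two_pi_pos.le (hπ.le.trans ha)), integral_two_pi_sin_mul]
  linarith [first_period (2 * π) (by linarith) le_rfl,
    hf.comp_add_two_pi.integral_nonneg (sub_nonneg.2 h)]

lemma integral_half_pi_sub_le (hf : IsSinWeight f) (ha : π ≤ a) :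
    (∫ x in 0..π / 2, sin x * f x) - f π ≤ ∫ x in 0..a, sin x * f x := by
  have hπ := pi_pos
  have hmid : f π ≤ ∫ x in π / 2..π, sin x * f x := by
    have := mul_sub_cos_le_integral_sin_mul (c := f π) (by linarith : π / 2 ≤ π)
      (hf.intervalIntegrable_of_nonneg (by positivity) hπ.le) fun x hx => ?_
    · simpa using this
    · have hs := sin_nonneg_of_nonneg_of_le_pi (by linarith [hx.1]) hx.2
      have hfx : f π ≤ f x := hf.antitoneOn (show 0 < x by linarith [hx.1]) hπ hx.2
      nlinarith
  have h1 := intervalIntegral.integral_add_adjacent_intervals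
    (hf.intervalIntegrable (by positivity : 0 ≤ π / 2))
    (hf.intervalIntegrable_of_nonneg (by positivity) hπ.le)
  have h2 := intervalIntegral.integral_add_adjacent_intervals (hf.intervalIntegrable hπ.le)
    (hf.intervalIntegrable_of_nonneg hπ.le (hπ.le.trans ha))
  linarith [hf.neg_two_mul_le_integral_pi ha]

lemma sub_le_integral (hf : IsSinWeight f) (ha : π ≤ a) :
    f (π / 2) - f π ≤ ∫ x in 0..a, sin x * f x := by
  have hπ := pi_pos
  have hhead : f (π / 2) ≤ ∫ x in 0..π / 2, sin x * f x := by
    have := mul_sub_cos_le_integral_sin_mul (c := f (π / 2)) (by positivity : 0 ≤ π / 2)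
      (hf.intervalIntegrable (by positivity)) fun x hx => ?_
    · simpa using this
    · have hs := sin_nonneg_of_nonneg_of_le_pi hx.1 (by linarith [hx.2])
      rcases hx.1.eq_or_lt with rfl | hx0
      · simp
      · have hfx : f (π / 2) ≤ f x := hf.antitoneOn hx0 (half_pos hπ) hx.2
        nlinarith
  linarith [hf.integral_half_pi_sub_le ha]

theorem integral_pos (hf : IsSinWeight f) (hstrict : StrictAntiOn f (Ioi 0)) (ha : 0 < a) :
    0 < ∫ x in 0..a, sin x * f x := by
  rcases le_or_gt a π with hπa | hπa
  · refine intervalIntegral.intervalIntegral_pos_of_pos_on (hf.intervalIntegrable ha.le)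
      (fun x hx => ?_) ha
    have hx1 : 0 < x + 1 := by linarith [hx.1]
    have hfx : 0 < f x := (hf.nonneg hx1).trans_lt (hstrict hx.1 hx1 (by linarith))
    exact mul_pos (sin_pos_of_pos_of_lt_pi hx.1 (hx.2.trans_le hπa)) hfx
  · linarith [hf.sub_le_integral hπa.le, hstrict (half_pos pi_pos) pi_pos (half_lt_self pi_pos)]

theorem pos_of_tendsto (hf : IsSinWeight f) (hstrict : StrictAntiOn f (Ioi 0)) {L : ℝ}
    (hL : Tendsto (fun b => ∫ x in 0..b, sin x * f x) atTop (𝓝 L)) : 0 < L := by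
  have := ge_of_tendsto hL ((eventually_ge_atTop π).mono fun b hb => hf.sub_le_integral hb)
  linarith [hstrict (half_pos pi_pos) pi_pos (half_lt_self pi_pos)]

end IsSinWeight

lemma sin_mul_rpow_neg_eq_sinc_mul {x : ℝ} (hx : 0 < x) (s : ℝ) :
    sin x * x ^ (-s) = sinc x * x ^ (1 - s) := by
  rw [sinc_of_ne_zero hx.ne', sub_eq_add_neg, rpow_add hx, rpow_one]
  field_simp

lemma isSinWeight_rpow_neg {s : ℝ} (hs0 : 0 ≤ s) (hs2 : s < 2) :
    IsSinWeight (fun x => x ^ (-s)) where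
  antitoneOn := antitoneOn_rpow_Ioi_of_exponent_nonpos (neg_nonpos.2 hs0)
  nonneg _ hx := (rpow_pos_of_pos hx _).le
  intervalIntegrable b hb :=
    ((intervalIntegral.intervalIntegrable_rpow' (by linarith : -1 < 1 - s)).continuousOn_mul
      continuous_sinc.continuousOn).congr fun x hx =>
        (sin_mul_rpow_neg_eq_sinc_mul (by rw [uIoc_of_le hb] at hx; exact hx.1) s).symm

section Fresnel

variable {γ a : ℝ}

lemma integral_cos_mul_rpow_neg (hγ0 : 0 < γ) (hγ1 : γ < 1) (ha : 0 ≤ a) :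
    ∫ x in 0..a, cos x * x ^ (-γ) =
      sin a * a ^ (-γ) + γ * ∫ x in 0..a, sin x * x ^ (-(γ + 1)) := by
  have hS := (isSinWeight_rpow_neg (s := γ + 1) (by linarith) (by linarith)).intervalIntegrable ha
  have hC : IntervalIntegrable (fun x => cos x * x ^ (-γ)) volume 0 a :=
    (intervalIntegral.intervalIntegrable_rpow' (by linarith)).continuousOn_mul
      continuous_cos.continuousOn
  -- `sin x * x ^ (-γ) = sinc x * x ^ (1 - γ)` also at `x = 0`, which gives continuity there
  have hcont : ContinuousOn (fun x => sin x * x ^ (-γ)) (Icc 0 a) := by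
    have hpow : Continuous fun x : ℝ => x ^ (1 - γ) :=
      continuous_id.rpow_const fun _ => Or.inr (by linarith)
    refine (continuous_sinc.mul hpow).continuousOn.congr fun x hx => ?_
    rcases hx.1.eq_or_lt with rfl | hx0
    · simp [zero_rpow (by linarith : 1 - γ ≠ 0)]
    · exact sin_mul_rpow_neg_eq_sinc_mul hx0 γ
  have hderiv : ∀ x ∈ Ioo 0 a, HasDerivAt (fun x => sin x * x ^ (-γ))
      (cos x * x ^ (-γ) - γ * (sin x * x ^ (-(γ + 1)))) x := fun x hx =>
    ((hasDerivAt_sin x).mul (hasDerivAt_rpow_const (p := -γ) (Or.inl hx.1.ne'))).congr_deriv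
      (by rw [show -γ - 1 = -(γ + 1) by ring]; ring)
  have := intervalIntegral.integral_eq_sub_of_hasDerivAt_of_le ha hcont hderiv
    (hC.sub (hS.const_mul γ))
  rw [intervalIntegral.integral_sub hC (hS.const_mul γ), intervalIntegral.integral_const_mul]
    at this
  simp only [sin_zero, zero_mul, sub_zero] at this
  linarith

lemma rpow_neg_div_le_integral_sin_mul_rpow (hγ0 : 0 < γ) (hγ1 : γ < 1) :
    (π / 2) ^ (-γ) / (1 - γ) ≤ ∫ x in 0..π / 2, sin x * x ^ (-(γ + 1)) := by
  have hπ := pi_pos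
  calc (π / 2) ^ (-γ) / (1 - γ) = ∫ x in 0..π / 2, 2 / π * x ^ (-γ) := by
        rw [intervalIntegral.integral_const_mul, integral_rpow (Or.inl (by linarith)),
          zero_rpow (by linarith), show -γ + 1 = 1 + -γ by ring, rpow_add (by positivity),
          rpow_one]
        field_simp
        ring
    _ ≤ ∫ x in 0..π / 2, sin x * x ^ (-(γ + 1)) := by
        refine intervalIntegral.integral_mono_on (by positivity)
          ((intervalIntegral.intervalIntegrable_rpow' (by linarith)).const_mul _)
          ((isSinWeight_rpow_neg (by linarith) (by linarith)).intervalIntegrable (by positivity))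
          fun x hx => ?_
        rcases hx.1.eq_or_lt with rfl | hx0
        · simp [zero_rpow (by linarith : -γ ≠ 0)]
        · have hx' : x ^ (-γ) = x * x ^ (-(γ + 1)) := by
            rw [← rpow_one_add' hx0.le (by linarith)]
            ring_nf
          rw [hx', ← mul_assoc]
          exact mul_le_mul_of_nonneg_right (mul_le_sin hx.1 hx.2) (rpow_pos_of_pos hx0 _).le

lemma rpow_neg_le_mul_sub (hγ : 1 / 2 ≤ γ) (hγ1 : γ < 1) :
    π ^ (-γ) ≤ γ * ((π / 2) ^ (-γ) / (1 - γ) - π ^ (-(γ + 1))) := by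
  have hπ := pi_pos
  have h2γ : 4 / 3 ≤ (2 : ℝ) ^ γ := by
    calc (4 / 3 : ℝ) ≤ √2 := le_sqrt_of_sq_le (by norm_num)
      _ = 2 ^ (1 / 2 : ℝ) := sqrt_eq_rpow 2
      _ ≤ 2 ^ γ := rpow_le_rpow_of_exponent_le one_le_two hγ
  have hratio : 1 ≤ γ / (1 - γ) := by rw [le_div_iff₀ (by linarith)]; linarith
  have hγπ : γ / π ≤ 1 / 3 := by rw [div_le_iff₀ hπ]; linarith [pi_gt_three]
  rw [div_rpow hπ.le zero_le_two, rpow_neg zero_le_two, neg_add, rpow_add hπ, rpow_neg_one]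
  have hP := rpow_pos_of_pos hπ (-γ)
  have : 1 ≤ γ / (1 - γ) * 2 ^ γ - γ / π := by nlinarith
  calc π ^ (-γ) ≤ π ^ (-γ) * (γ / (1 - γ) * 2 ^ γ - γ / π) := le_mul_of_one_le_right hP.le this
    _ = _ := by field_simp

theorem integral_cos_mul_rpow_neg_pos (hγ : 1 / 2 ≤ γ) (hγ1 : γ < 1) (ha : 0 < a) :
    0 < ∫ x in 0..a, cos x * x ^ (-γ) := by
  have hγ0 : 0 < γ := by linarith
  have hw := isSinWeight_rpow_neg (s := γ + 1) (by linarith) (by linarith)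
  rw [integral_cos_mul_rpow_neg hγ0 hγ1 ha.le]
  rcases le_or_gt 0 (sin a) with hs | hs
  · exact add_pos_of_nonneg_of_pos (mul_nonneg hs (rpow_nonneg ha.le _))
      (mul_pos hγ0 (hw.integral_pos (strictAntiOn_rpow_Ioi_of_exponent_neg (by linarith)) ha))
  have hπa : π < a := by
    by_contra! h
    exact hs.not_ge (sin_nonneg_of_nonneg_of_le_pi ha.le h)
  have hS : (π / 2) ^ (-γ) / (1 - γ) - π ^ (-(γ + 1)) ≤ ∫ x in 0..a, sin x * x ^ (-(γ + 1)) :=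
    (sub_le_sub_right (rpow_neg_div_le_integral_sin_mul_rpow hγ0 hγ1) _).trans
      (hw.integral_half_pi_sub_le hπa.le)
  have hpow : a ^ (-γ) < π ^ (-γ) := rpow_lt_rpow_of_neg pi_pos hπa (by linarith)
  have hsin : -a ^ (-γ) ≤ sin a * a ^ (-γ) := by
    nlinarith [neg_one_le_sin a, rpow_pos_of_pos ha (-γ)]
  linarith [rpow_neg_le_mul_sub hγ hγ1, mul_le_mul_of_nonneg_left hS hγ0.le]

lemma integrableOn_cos_mul_rpow_neg_Ioi (hγ0 : 0 < γ) {c : ℝ} (hc : 0 < c) :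
    IntegrableOn (fun x => cos x * x ^ (-(γ + 1))) (Ioi c) :=
  (integrableOn_Ioi_rpow_of_lt (by linarith) hc).bdd_mul (c := 1)
    continuous_cos.aestronglyMeasurable (ae_of_all _ fun x => by simpa using abs_cos_le_one x)

lemma integral_pi_sin_mul_rpow_neg {b : ℝ} (hb : π ≤ b) :
    ∫ x in π..b, sin x * x ^ (-γ) =
      -(cos b * b ^ (-γ)) - π ^ (-γ) - γ * ∫ x in π..b, cos x * x ^ (-(γ + 1)) := by
  have hpos : ∀ x ∈ uIcc π b, 0 < x := fun x hx =>
    pi_pos.trans_le (by rw [uIcc_of_le hb] at hx; exact hx.1)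
  have hcont : ∀ r : ℝ, ContinuousOn (fun x => x ^ r) (uIcc π b) := fun r =>
    continuousOn_id.rpow_const (p := r) fun x hx => Or.inl (hpos x hx).ne'
  have hS : IntervalIntegrable (fun x => sin x * x ^ (-γ)) volume π b :=
    (continuous_sin.continuousOn.mul (hcont _)).intervalIntegrable
  have hC : IntervalIntegrable (fun x => cos x * x ^ (-(γ + 1))) volume π b :=
    (continuous_cos.continuousOn.mul (hcont _)).intervalIntegrable
  have hderiv : ∀ x ∈ uIcc π b, HasDerivAt (fun x => -(cos x * x ^ (-γ)))
      (sin x * x ^ (-γ) + γ * (cos x * x ^ (-(γ + 1)))) x := fun x hx =>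
    ((hasDerivAt_cos x).mul (hasDerivAt_rpow_const (p := -γ) (Or.inl (hpos x hx).ne'))).neg
      |>.congr_deriv (by rw [show -γ - 1 = -(γ + 1) by ring]; ring)
  have := intervalIntegral.integral_eq_sub_of_hasDerivAt hderiv (hS.add (hC.const_mul γ))
  rw [intervalIntegral.integral_add hS (hC.const_mul γ), intervalIntegral.integral_const_mul,
    cos_pi] at this
  linarith

theorem exists_tendsto_integral_sin_mul_rpow_neg (hγ0 : 0 < γ) (hγ1 : γ < 1) :
    ∃ L, Tendsto (fun b => ∫ x in 0..b, sin x * x ^ (-γ)) atTop (𝓝 L) := by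
  have hw := isSinWeight_rpow_neg hγ0.le (by linarith)
  have hboundary : Tendsto (fun b => cos b * b ^ (-γ)) atTop (𝓝 0) :=
    squeeze_zero_norm' ((eventually_gt_atTop 0).mono fun b hb => by
      rw [norm_mul, norm_of_nonneg (rpow_pos_of_pos hb _).le]
      exact mul_le_of_le_one_left (rpow_pos_of_pos hb _).le (abs_cos_le_one b))
      (tendsto_rpow_neg_atTop hγ0)
  have htail := intervalIntegral_tendsto_integral_Ioi π
    (integrableOn_cos_mul_rpow_neg_Ioi hγ0 pi_pos) tendsto_id
  refine ⟨_, ((tendsto_const_nhds (x := ∫ x in 0..π, sin x * x ^ (-γ))).add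
    ((hboundary.neg.sub (tendsto_const_nhds (x := π ^ (-γ)))).sub (htail.const_mul γ))).congr' ?_⟩
  filter_upwards [eventually_ge_atTop π] with b hb
  rw [← intervalIntegral.integral_add_adjacent_intervals (b := π) (hw.intervalIntegrable pi_pos.le)
    (hw.intervalIntegrable_of_nonneg pi_pos.le (pi_pos.le.trans hb)),
    integral_pi_sin_mul_rpow_neg hb]
  rfl

end Fresnel

lemma setIntegral_Ioc_div_rpow (g : ℝ → ℝ) (γ : ℝ) {b : ℝ} (hb : 0 ≤ b) :
    ∫ x in Ioc 0 b, g x / x ^ γ = ∫ x in 0..b, g x * x ^ (-γ) := by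
  rw [intervalIntegral.integral_of_le hb]
  exact setIntegral_congr_fun measurableSet_Ioc fun x hx => by
    rw [rpow_neg hx.1.le, div_eq_mul_inv]

/-- positivity of the incomplete Fresnel-type integrals
`∫₀ᵃ cos x / x^γ dx` (for `γ ∈ [1/2,1)`) and `∫₀ᵃ sin x / x^γ dx` (for `γ ∈ (0,1)`),
and of the convergent improper integral `∫₀^∞ sin x / x^γ dx`. -/
theorem fresnel_positivity (a : ℝ) (ha : 0 < a) :
    (∀ γ : ℝ, γ ∈ Set.Ico (1 / 2 : ℝ) 1 →
      0 < ∫ x in Set.Ioc (0 : ℝ) a, Real.cos x / x ^ γ) ∧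
    (∀ γ : ℝ, γ ∈ Set.Ioo (0 : ℝ) 1 →
      0 < ∫ x in Set.Ioc (0 : ℝ) a, Real.sin x / x ^ γ) ∧
    (∀ γ : ℝ, γ ∈ Set.Ioo (0 : ℝ) 1 → ∃ L : ℝ, 0 < L ∧
      Filter.Tendsto (fun b : ℝ => ∫ x in Set.Ioc (0 : ℝ) b, Real.sin x / x ^ γ)
        Filter.atTop (nhds L)) := by
  refine ⟨fun γ hγ => ?_, fun γ hγ => ?_, fun γ hγ => ?_⟩
  · rw [setIntegral_Ioc_div_rpow _ _ ha.le]
    exact integral_cos_mul_rpow_neg_pos hγ.1 hγ.2 ha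
  · rw [setIntegral_Ioc_div_rpow _ _ ha.le]
    exact (isSinWeight_rpow_neg hγ.1.le (by linarith [hγ.2])).integral_pos
      (strictAntiOn_rpow_Ioi_of_exponent_neg (neg_neg_of_pos hγ.1)) ha
  · obtain ⟨L, hL⟩ := exists_tendsto_integral_sin_mul_rpow_neg hγ.1 hγ.2
    refine ⟨L, (isSinWeight_rpow_neg hγ.1.le (by linarith [hγ.2])).pos_of_tendsto
      (strictAntiOn_rpow_Ioi_of_exponent_neg (neg_neg_of_pos hγ.1)) hL, hL.congr' ?_⟩
    filter_upwards [eventually_ge_atTop 0] with b hb using (setIntegral_Ioc_div_rpow _ _ hb).symm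
end

section
/- Fix β ∈ (0,1) and let d_j = β(β+1)⋯(β+j−1)/j! for j ≥ 1. Then there exists a constant C (depending only on β) such that for every n ≥ 1 and every θ with 0 < |θ| ≤ π: (i) |Σ_{j=1}^{n} j·d_j·e^{ijθ}| ≤ C·n^β/|θ| when |θ| > n^{−1}, and |Σ_{j=1}^{n} j·d_j·e^{ijθ}| ≤ C·n^{1+β} when |θ| ≤ n^{−1}; (ii) |Σ_{j=1}^{n} j²·d_j·e^{ijθ}| ≤ C·n^{β+1}/|θ| when |θ| > n^{−1}, and |Σ_{j=1}^{n} j²·d_j·e^{ijθ}| ≤ C·n^{2+β} when |θ| ≤ n^{−1}. (These are bounds on the first and second θ-derivatives of B_n(e^{iθ}) = 1 + Σ_{j=1}^n d_j e^{ijθ}.) -/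
open Finset

/-- Taylor coefficients of `(1−z)^{−β}`: `d_j = β(β+1)⋯(β+j−1)/j!`. -/
noncomputable def dcoef (β : ℝ) (j : ℕ) : ℝ :=
  (∏ i ∈ Finset.range j, (β + i)) / (Nat.factorial j)

/-! Both sums are `∑ a_j e^{ijθ}` with `a_j = j d_j` or `j² d_j`, nondecreasing in `j` because
`(j + 1) d_{j+1} = (j + β) d_j`. The same recurrence gives
`j d_j = β ∏_{0<k<j} (1 + β/k) ≤ β e^{β H_{j-1}} ≤ β e^β j^β`. For `0 < |θ| ≤ π` the partial sums of
`e^{ikθ}` are at most `2 / |e^{iθ} - 1| ≤ π / |θ|` (Jordan's inequality), so Abel summation bounds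
the sums by `2π a_n / |θ|`, while the triangle inequality bounds them by `n a_n`. -/

section Coefficients

variable {β : ℝ}

theorem dcoef_succ_mul (β : ℝ) (j : ℕ) :
    dcoef β (j + 1) * (j + 1) = dcoef β j * (β + j) := by
  unfold dcoef
  rw [prod_range_succ, Nat.factorial_succ]
  push_cast
  field_simp

theorem dcoef_nonneg (hβ : 0 ≤ β) (j : ℕ) : 0 ≤ dcoef β j :=
  div_nonneg (prod_nonneg fun _ _ ↦ by positivity) (Nat.cast_nonneg _)

theorem monotone_natCast_mul_dcoef (hβ : 0 ≤ β) : Monotone fun j : ℕ ↦ (j : ℝ) * dcoef β j := by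
  refine monotone_nat_of_le_succ fun j ↦ ?_
  have := dcoef_succ_mul β j
  push_cast
  nlinarith [dcoef_nonneg hβ j]

theorem monotone_natCast_sq_mul_dcoef (hβ : 0 ≤ β) :
    Monotone fun j : ℕ ↦ (j : ℝ) ^ 2 * dcoef β j := by
  have h : Monotone fun j : ℕ ↦ (j : ℝ) * ((j : ℝ) * dcoef β j) :=
    Nat.mono_cast.mul (monotone_natCast_mul_dcoef hβ) (fun j ↦ Nat.cast_nonneg j)
      fun j ↦ mul_nonneg (Nat.cast_nonneg j) (dcoef_nonneg hβ j)
  convert h using 2 with j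
  ring

theorem succ_mul_dcoef_succ_le_exp_harmonic (hβ : 0 ≤ β) (n : ℕ) :
    (n + 1 : ℝ) * dcoef β (n + 1) ≤ β * Real.exp (β * harmonic n) := by
  induction n with
  | zero => simp [dcoef]
  | succ n ih =>
    have hrec : ((n + 1 : ℕ) + 1 : ℝ) * dcoef β (n + 1 + 1)
        = (n + 1 : ℝ) * dcoef β (n + 1) * (1 + β / (n + 1)) := by
      have := dcoef_succ_mul β (n + 1)
      push_cast at this ⊢
      field_simp
      linarith
    calc _ = (n + 1 : ℝ) * dcoef β (n + 1) * (1 + β / (n + 1)) := hrec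
      _ ≤ β * Real.exp (β * harmonic n) * Real.exp (β / (n + 1)) := by
        gcongr
        linarith [Real.add_one_le_exp (β / (n + 1))]
      _ = β * Real.exp (β * harmonic (n + 1)) := by
        rw [harmonic_succ, mul_assoc, ← Real.exp_add]
        push_cast
        ring_nf

theorem natCast_mul_dcoef_le (hβ : 0 ≤ β) (n : ℕ) :
    (n : ℝ) * dcoef β n ≤ β * Real.exp β * (n : ℝ) ^ β := by
  rcases n with _ | n
  · simp only [CharP.cast_eq_zero, zero_mul]
    positivity
  calc ((n + 1 : ℕ) : ℝ) * dcoef β (n + 1) ≤ β * Real.exp (β * harmonic n) := by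
        exact_mod_cast succ_mul_dcoef_succ_le_exp_harmonic hβ n
    _ ≤ β * Real.exp (β * (1 + Real.log (n + 1 : ℕ))) := by
        have : harmonic n ≤ harmonic (n + 1) := by
          rw [harmonic_succ]
          exact le_add_of_nonneg_right (by positivity)
        gcongr
        exact (Rat.cast_le.2 this).trans (harmonic_le_one_add_log (n + 1))
    _ = β * Real.exp β * ((n + 1 : ℕ) : ℝ) ^ β := by
        rw [Real.rpow_def_of_pos (by positivity), mul_add, mul_one, Real.exp_add,
          mul_comm β (Real.log _), mul_assoc]

end Coefficients

theorem Monotone.norm_sum_range_succ_smul_le {E : Type*} [SeminormedAddCommGroup E]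
    [NormedSpace ℝ E] {f : ℕ → ℝ} {z : ℕ → E} {b : ℝ} (hf : Monotone f) (hf0 : 0 ≤ f 0)
    (hz : ∀ m, ‖∑ i ∈ range m, z i‖ ≤ b) (n : ℕ) :
    ‖∑ i ∈ range (n + 1), f i • z i‖ ≤ 2 * f n * b := by
  have hb : 0 ≤ b := (norm_nonneg _).trans (hz 0)
  have hfn : 0 ≤ f n := hf0.trans (hf n.zero_le)
  rw [sum_range_by_parts, Nat.add_sub_cancel]
  calc ‖f n • ∑ i ∈ range (n + 1), z i
        - ∑ i ∈ range n, (f (i + 1) - f i) • ∑ k ∈ range (i + 1), z k‖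
      ≤ f n * b + ∑ i ∈ range n, (f (i + 1) - f i) * b := by
        refine (norm_sub_le _ _).trans (add_le_add ?_ ((norm_sum_le _ _).trans ?_))
        · rw [norm_smul, Real.norm_of_nonneg hfn]
          exact mul_le_mul_of_nonneg_left (hz _) hfn
        · refine sum_le_sum fun i _ ↦ ?_
          have hi : 0 ≤ f (i + 1) - f i := sub_nonneg.2 (hf i.le_succ)
          rw [norm_smul, Real.norm_of_nonneg hi]
          exact mul_le_mul_of_nonneg_left (hz _) hi
    _ = (2 * f n - f 0) * b := by
        rw [← sum_mul, sum_range_sub (fun i ↦ f i)]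
        ring
    _ ≤ 2 * f n * b := by nlinarith

theorem two_div_pi_mul_abs_le_norm_exp_I_mul_ofReal_sub_one {θ : ℝ} (hθ : |θ| ≤ Real.pi) :
    2 / Real.pi * |θ| ≤ ‖Complex.exp (Complex.I * θ) - 1‖ := by
  have hsin := Real.mul_abs_le_abs_sin (x := θ / 2) (by rw [abs_div, abs_two]; linarith)
  rw [Complex.norm_exp_I_mul_ofReal_sub_one, norm_mul, Real.norm_eq_abs, Real.norm_eq_abs,
    abs_two, abs_div, abs_two] at *
  linarith

theorem norm_sum_range_exp_I_mul_le {θ : ℝ} (hθ0 : 0 < |θ|) (hθπ : |θ| ≤ Real.pi) (m : ℕ) :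
    ‖∑ k ∈ range m, Complex.exp (Complex.I * k * θ)‖ ≤ Real.pi / |θ| := by
  set w := Complex.exp (Complex.I * θ)
  have hw : ‖w‖ = 1 := Complex.norm_exp_I_mul_ofReal θ
  have hlow : 2 / Real.pi * |θ| ≤ ‖w - 1‖ :=
    two_div_pi_mul_abs_le_norm_exp_I_mul_ofReal_sub_one hθπ
  have hlow0 : 0 < ‖w - 1‖ := lt_of_lt_of_le (by positivity) hlow
  have hpow (k : ℕ) : Complex.exp (Complex.I * k * θ) = w ^ k := by
    rw [← Complex.exp_nat_mul]
    ring_nf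
  simp_rw [hpow]
  rw [geom_sum_eq (by simpa [sub_eq_zero] using hlow0.ne'), norm_div]
  calc ‖w ^ m - 1‖ / ‖w - 1‖ ≤ 2 / (2 / Real.pi * |θ|) := by
        gcongr
        exact (norm_sub_le _ _).trans (by simp [hw]; norm_num)
    _ = Real.pi / |θ| := by field_simp

section ExponentialSums

variable {a : ℕ → ℝ}

theorem sum_Icc_one_eq_sum_range_succ {M : Type*} [AddCommMonoid M] {g : ℕ → M} (hg : g 0 = 0)
    (n : ℕ) : ∑ j ∈ Icc 1 n, g j = ∑ j ∈ range (n + 1), g j := by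
  rw [range_eq_Ico, sum_eq_sum_Ico_succ_bot n.succ_pos, hg, zero_add, Nat.succ_eq_add_one,
    Ico_add_one_right_eq_Icc]

theorem norm_sum_Icc_mul_exp_I_mul_le_div (ha : Monotone a) (ha0 : a 0 = 0) {θ : ℝ}
    (hθ0 : 0 < |θ|) (hθπ : |θ| ≤ Real.pi) (n : ℕ) :
    ‖∑ j ∈ Icc 1 n, (a j : ℂ) * Complex.exp (Complex.I * j * θ)‖
      ≤ 2 * Real.pi * a n / |θ| := by
  rw [sum_Icc_one_eq_sum_range_succ (by simp [ha0])]
  simp_rw [← Complex.real_smul]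
  calc _ ≤ 2 * a n * (Real.pi / |θ|) :=
        ha.norm_sum_range_succ_smul_le ha0.ge (norm_sum_range_exp_I_mul_le hθ0 hθπ) n
    _ = 2 * Real.pi * a n / |θ| := by ring

theorem norm_sum_Icc_mul_exp_I_mul_le (ha : Monotone a) (ha0 : 0 ≤ a 0) (θ : ℝ) (n : ℕ) :
    ‖∑ j ∈ Icc 1 n, (a j : ℂ) * Complex.exp (Complex.I * j * θ)‖ ≤ n * a n := by
  calc _ ≤ ∑ j ∈ Icc 1 n, a n := by
        refine (norm_sum_le _ _).trans (sum_le_sum fun j hj ↦ ?_)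
        have hj : j ≤ n := (mem_Icc.1 hj).2
        rw [norm_mul, Complex.norm_real, Real.norm_of_nonneg (ha0.trans (ha j.zero_le)),
          show Complex.I * j * θ = Complex.I * (j * θ : ℝ) by push_cast; ring,
          Complex.norm_exp_I_mul_ofReal, mul_one]
        exact ha hj
    _ = n * a n := by simp

end ExponentialSums

/-- bounds on the first and second `θ`-derivatives of
`B_n(e^{iθ}) = 1 + Σ_{j=1}^n d_j e^{ijθ}`, i.e. on `Σ j d_j e^{ijθ}` and `Σ j² d_j e^{ijθ}`. -/
theorem Bn_derivative_bounds (β : ℝ) (hβ : β ∈ Set.Ioo (0 : ℝ) 1) :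
    ∃ C > (0 : ℝ), ∀ n : ℕ, 1 ≤ n → ∀ θ : ℝ, 0 < |θ| → |θ| ≤ Real.pi →
      (((n : ℝ)⁻¹ < |θ| →
        ‖∑ j ∈ Finset.Icc 1 n, (j : ℂ) * (dcoef β j : ℂ) *
            Complex.exp (Complex.I * (j : ℂ) * (θ : ℂ))‖ ≤ C * (n : ℝ) ^ β / |θ|) ∧
       (|θ| ≤ (n : ℝ)⁻¹ →
        ‖∑ j ∈ Finset.Icc 1 n, (j : ℂ) * (dcoef β j : ℂ) *
            Complex.exp (Complex.I * (j : ℂ) * (θ : ℂ))‖ ≤ C * (n : ℝ) ^ (1 + β))) ∧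
      (((n : ℝ)⁻¹ < |θ| →
        ‖∑ j ∈ Finset.Icc 1 n, (j : ℂ) ^ 2 * (dcoef β j : ℂ) *
            Complex.exp (Complex.I * (j : ℂ) * (θ : ℂ))‖ ≤ C * (n : ℝ) ^ (β + 1) / |θ|) ∧
       (|θ| ≤ (n : ℝ)⁻¹ →
        ‖∑ j ∈ Finset.Icc 1 n, (j : ℂ) ^ 2 * (dcoef β j : ℂ) *
            Complex.exp (Complex.I * (j : ℂ) * (θ : ℂ))‖ ≤ C * (n : ℝ) ^ (2 + β))) := by
  have hβ0 : 0 ≤ β := hβ.1.le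
  set K := β * Real.exp β
  have hK : 0 < K := by have := hβ.1; positivity
  refine ⟨2 * Real.pi * K, by positivity, fun n hn θ hθ0 hθπ ↦ ?_⟩
  have hn0 : (n : ℝ) ≠ 0 := Nat.cast_ne_zero.2 (by omega)
  have hK2π : K ≤ 2 * Real.pi * K := le_mul_of_one_le_left hK.le (by linarith [Real.pi_gt_three])
  have ha : (n : ℝ) * dcoef β n ≤ K * (n : ℝ) ^ β := natCast_mul_dcoef_le hβ0 n
  have hb : (n : ℝ) ^ 2 * dcoef β n ≤ K * (n : ℝ) ^ (β + 1) := by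
    rw [Real.rpow_add_one hn0, sq, mul_assoc, mul_comm _ (n : ℝ), mul_left_comm K]
    exact mul_le_mul_of_nonneg_left ha n.cast_nonneg
  have hc : (n : ℝ) * ((n : ℝ) ^ 2 * dcoef β n) ≤ K * (n : ℝ) ^ (2 + β) := by
    rw [show 2 + β = β + 1 + 1 by ring, Real.rpow_add_one hn0, mul_comm _ (n : ℝ),
      mul_left_comm K]
    exact mul_le_mul_of_nonneg_left hb n.cast_nonneg
  have h1 := norm_sum_Icc_mul_exp_I_mul_le_div (monotone_natCast_mul_dcoef hβ0) (by simp) hθ0 hθπ n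
  have h2 := norm_sum_Icc_mul_exp_I_mul_le (monotone_natCast_mul_dcoef hβ0) (by simp) θ n
  have h3 := norm_sum_Icc_mul_exp_I_mul_le_div (monotone_natCast_sq_mul_dcoef hβ0) (by simp)
    hθ0 hθπ n
  have h4 := norm_sum_Icc_mul_exp_I_mul_le (monotone_natCast_sq_mul_dcoef hβ0) (by simp) θ n
  push_cast at h1 h2 h3 h4
  refine ⟨⟨fun _ ↦ h1.trans ?_, fun _ ↦ h2.trans ?_⟩, fun _ ↦ h3.trans ?_, fun _ ↦ h4.trans ?_⟩
  · rw [mul_assoc _ K]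
    exact div_le_div_of_nonneg_right (mul_le_mul_of_nonneg_left ha (by positivity)) hθ0.le
  · rw [← mul_assoc, ← sq, add_comm 1 β]
    exact hb.trans (by gcongr)
  · rw [mul_assoc _ K]
    exact div_le_div_of_nonneg_right (mul_le_mul_of_nonneg_left hb (by positivity)) hθ0.le
  · exact hc.trans (by gcongr)
end

section
/- Fix β ∈ (0,1) and let c_j = β(1−β)(2−β)⋯(j−1−β)/j! for j ≥ 1. Then there exist υ > 0 and a constant C (depending only on β) such that for every n ≥ 1: |Σ_{j=1}^{n} j·c_j·e^{ijθ}| ≤ C·|θ|^{β−1} for all θ with 0.01·n^{−1} < |θ| < υ, and |Σ_{j=1}^{n} j·c_j·e^{ijθ}| ≤ C·n^{1−β} for all θ with |θ| ≤ 0.01·n^{−1}. (This bounds the θ-derivative of A_n(e^{iθ}) = M·n^{−β} + Σ_{j=1}^n c_j(1 − e^{ijθ}), which equals −i·Σ_{j=1}^n j c_j e^{ijθ}.) -/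
open Finset

/-- Taylor coefficients of `(1−z)^{β}`: `c_j = β(1−β)(2−β)⋯(j−1−β)/j!`,
so that `(1−z)^β = 1 − Σ_{j≥1} c_j z^j`. -/
noncomputable def ccoef (β : ℝ) (j : ℕ) : ℝ :=
  (β * ∏ i ∈ Finset.Ico 1 j, ((i : ℝ) - β)) / (Nat.factorial j)

/-!
Write `a_j = j c_j = β ∏_{0<i<j} (1 - β/i)`. It is nonnegative and nonincreasing, and the weighted
AM–GM inequality `x^{1-β} (x+1)^β ≤ x + β` gives both `a_j ≤ j^{-β}` and
`Σ_{j ≤ n} j^{-β} ≤ n^{1-β}/(1-β)`, which bounds the sum trivially. For `θ ≠ 0` split at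
`N = ⌊1/|θ|⌋`: the head is at most `N^{1-β}/(1-β) ≤ |θ|^{β-1}/(1-β)`, and Abel summation against
the geometric partial sums of `e^{iθ}`, which are `O(1/|θ|)`, bounds the tail by
`O(a_{N+1}/|θ|) = O(|θ|^{β-1})`.
-/

section RpowSteps

variable {β x : ℝ}

lemma rpow_one_sub_mul_add_one_rpow_le (hβ0 : 0 ≤ β) (hβ1 : β ≤ 1) (hx : 0 ≤ x) :
    x ^ (1 - β) * (x + 1) ^ β ≤ x + β := by
  have := Real.geom_mean_le_arith_mean2_weighted (sub_nonneg.2 hβ1) hβ0 hx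
    (by linarith : (0 : ℝ) ≤ x + 1) (by ring)
  linarith

lemma one_sub_mul_rpow_neg_le_sub_rpow (hβ0 : 0 ≤ β) (hβ1 : β ≤ 1) (hx : 0 ≤ x) :
    (1 - β) * (x + 1) ^ (-β) ≤ (x + 1) ^ (1 - β) - x ^ (1 - β) := by
  have hx1 : 0 < x + 1 := by linarith
  have hy : 0 < (x + 1) ^ β := Real.rpow_pos_of_pos hx1 β
  have amgm := rpow_one_sub_mul_add_one_rpow_le hβ0 hβ1 hx
  rw [Real.rpow_neg hx1.le, Real.rpow_sub hx1, Real.rpow_one, le_sub_iff_add_le,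
    ← div_eq_mul_inv, div_add' _ _ _ hy.ne', div_le_div_iff_of_pos_right hy]
  linarith

lemma rpow_neg_mul_sub_div_le (hβ0 : 0 ≤ β) (hβ1 : β ≤ 1) (hx : 1 ≤ x) :
    x ^ (-β) * ((x - β) / x) ≤ (x + 1) ^ (-β) := by
  have hx0 : 0 < x := by linarith
  have hu : 0 < x ^ β := Real.rpow_pos_of_pos hx0 β
  have hy : 0 < (x + 1) ^ β := Real.rpow_pos_of_pos (by linarith) β
  have amgm := rpow_one_sub_mul_add_one_rpow_le hβ0 hβ1 hx0.le
  rw [Real.rpow_sub hx0, Real.rpow_one] at amgm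
  rw [Real.rpow_neg hx0.le, Real.rpow_neg (by linarith), inv_mul_eq_div, div_div,
    div_le_iff₀ (by positivity), inv_mul_eq_div, le_div_iff₀ hy]
  rw [div_mul_eq_mul_div, div_le_iff₀ hu] at amgm
  refine le_of_mul_le_mul_left ?_ hx0
  nlinarith [mul_le_mul_of_nonneg_left amgm (by linarith : 0 ≤ x - β),
    mul_nonneg (sq_nonneg β) hu.le]

lemma sum_Icc_rpow_neg_le (hβ0 : 0 ≤ β) (hβ1 : β < 1) (m : ℕ) :
    ∑ j ∈ Icc 1 m, (j : ℝ) ^ (-β) ≤ (m : ℝ) ^ (1 - β) / (1 - β) := by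
  have hβ : 0 < 1 - β := by linarith
  induction m with
  | zero => simp [Real.zero_rpow hβ.ne']
  | succ m ih =>
    rw [sum_Icc_succ_top (by omega), Nat.cast_succ, le_div_iff₀ hβ, add_mul]
    have step := one_sub_mul_rpow_neg_le_sub_rpow hβ0 hβ1.le (Nat.cast_nonneg (α := ℝ) m)
    rw [le_div_iff₀ hβ] at ih
    linarith

end RpowSteps

namespace ccoef

variable {β : ℝ}

lemma succ {j : ℕ} (hj : 1 ≤ j) :
    ccoef β (j + 1) = ccoef β j * ((j - β) / (j + 1)) := by
  simp only [ccoef, prod_Ico_succ_top hj, Nat.factorial_succ, Nat.cast_mul, Nat.cast_succ]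
  field_simp

lemma natCast_mul_succ {j : ℕ} (hj : 1 ≤ j) :
    ((j + 1 : ℕ) : ℝ) * ccoef β (j + 1) = j * ccoef β j * ((j - β) / j) := by
  have : (j : ℝ) ≠ 0 := by positivity
  rw [succ hj]
  push_cast
  field_simp

lemma nonneg (hβ0 : 0 ≤ β) (hβ1 : β ≤ 1) (j : ℕ) : 0 ≤ ccoef β j := by
  refine div_nonneg (mul_nonneg hβ0 (prod_nonneg fun i hi => ?_)) (Nat.cast_nonneg _)
  have : (1 : ℝ) ≤ i := by exact_mod_cast (mem_Ico.1 hi).1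
  linarith

lemma antitoneOn_natCast_mul (hβ0 : 0 ≤ β) (hβ1 : β ≤ 1) :
    AntitoneOn (fun j : ℕ => j * ccoef β j) (Set.Ici 1) := by
  refine antitoneOn_nat_Ici_of_succ_le fun j hj => ?_
  have hj' : (1 : ℝ) ≤ j := by exact_mod_cast hj
  rw [natCast_mul_succ hj]
  refine mul_le_of_le_one_right (mul_nonneg (Nat.cast_nonneg _) (nonneg hβ0 hβ1 j)) ?_
  rw [div_le_one (by linarith)]
  linarith

lemma natCast_mul_le_rpow (hβ0 : 0 ≤ β) (hβ1 : β ≤ 1) {j : ℕ} (hj : 1 ≤ j) :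
    j * ccoef β j ≤ (j : ℝ) ^ (-β) := by
  induction j, hj using Nat.le_induction with
  | base => simp [ccoef, hβ1]
  | succ j hj ih =>
    have hj' : (1 : ℝ) ≤ j := by exact_mod_cast hj
    rw [natCast_mul_succ hj, Nat.cast_succ]
    calc j * ccoef β j * ((j - β) / j) ≤ (j : ℝ) ^ (-β) * ((j - β) / j) :=
          mul_le_mul_of_nonneg_right ih (div_nonneg (by linarith) (by linarith))
      _ ≤ (j + 1 : ℝ) ^ (-β) := rpow_neg_mul_sub_div_le hβ0 hβ1 hj'

end ccoef

lemma Finset.norm_sum_Ico_smul_le_of_antitoneOn {E : Type*} [SeminormedAddCommGroup E]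
    [NormedSpace ℝ E] {f : ℕ → ℝ} {g : ℕ → E} {m n : ℕ} {M : ℝ}
    (hf : AntitoneOn f (Set.Ici m)) (hf0 : ∀ i, m ≤ i → 0 ≤ f i)
    (hg : ∀ k, ‖∑ i ∈ range k, g i‖ ≤ M) :
    ‖∑ i ∈ Ico m n, f i • g i‖ ≤ 2 * M * f m := by
  have hM : 0 ≤ M := by simpa using hg 0
  rcases le_or_gt n m with hnm | hmn
  · simpa [Ico_eq_empty_of_le hnm] using mul_nonneg (mul_nonneg zero_le_two hM) (hf0 m le_rfl)
  have hsub : ∀ i ∈ Ico m (n - 1), 0 ≤ f i - f (i + 1) := fun i hi => by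
    have := (mem_Ico.1 hi).1
    exact sub_nonneg.2 (hf (Set.mem_Ici.2 this) (Set.mem_Ici.2 (by omega)) (by omega))
  have htel : ∑ i ∈ Ico m (n - 1), (f i - f (i + 1)) = f m - f (n - 1) := by
    rw [← neg_sub, ← sum_Ico_sub (f := f) (by omega), ← sum_neg_distrib]
    simp
  have hsmul : ∀ c : ℝ, 0 ≤ c → ∀ k, ‖c • ∑ i ∈ range k, g i‖ ≤ c * M := fun c hc k => by
    rw [norm_smul, Real.norm_of_nonneg hc]
    exact mul_le_mul_of_nonneg_left (hg k) hc
  rw [sum_Ico_by_parts f g hmn]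
  calc _ ≤ ‖f (n - 1) • ∑ i ∈ range n, g i‖ + ‖f m • ∑ i ∈ range m, g i‖
        + ‖∑ i ∈ Ico m (n - 1), (f (i + 1) - f i) • ∑ j ∈ range (i + 1), g j‖ :=
        norm_sub_le_of_le (norm_sub_le _ _) le_rfl
    _ ≤ f (n - 1) * M + f m * M + ∑ i ∈ Ico m (n - 1), (f i - f (i + 1)) * M := by
        gcongr
        · exact hsmul _ (hf0 _ (by omega)) n
        · exact hsmul _ (hf0 m le_rfl) m
        · refine norm_sum_le_of_le _ fun i hi => ?_
          rw [← neg_sub, neg_smul, norm_neg]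
          exact hsmul _ (hsub i hi) (i + 1)
    _ = 2 * M * f m := by rw [← sum_mul, htel]; ring

lemma norm_geom_sum_le {K : Type*} [NormedDivisionRing K] {z : K} (hz : ‖z‖ ≤ 1) (hz1 : z ≠ 1)
    (k : ℕ) : ‖∑ i ∈ range k, z ^ i‖ ≤ 2 / ‖z - 1‖ := by
  rw [geom_sum_eq hz1, norm_div]
  gcongr
  calc ‖z ^ k - 1‖ ≤ ‖z‖ ^ k + ‖(1 : K)‖ := by rw [← norm_pow]; exact norm_sub_le _ _
    _ ≤ 2 := by rw [norm_one]; linarith [pow_le_one₀ (norm_nonneg z) hz (n := k)]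

open Real in
lemma mul_abs_le_norm_exp_I_mul_sub_one {θ : ℝ} (hθ : |θ| ≤ π) :
    2 / π * |θ| ≤ ‖Complex.exp (Complex.I * θ) - 1‖ := by
  rw [Complex.norm_exp_I_mul_ofReal_sub_one, norm_mul, Real.norm_eq_abs, Real.norm_eq_abs,
    abs_two]
  wlog hθ0 : 0 ≤ θ generalizing θ
  · simpa [neg_div] using this (θ := -θ) (by simpa using hθ) (by linarith)
  rw [abs_of_nonneg hθ0] at hθ ⊢
  have := mul_le_sin (by linarith : 0 ≤ θ / 2) (by linarith)
  linarith [le_abs_self (sin (θ / 2))]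

section PowerSum

variable {β : ℝ} {z : ℂ}

lemma norm_sum_natCast_mul_ccoef_smul_pow_le (hβ0 : 0 ≤ β) (hβ1 : β < 1) (hz : ‖z‖ ≤ 1)
    (n : ℕ) : ‖∑ j ∈ Icc 1 n, ((j : ℝ) * ccoef β j) • z ^ j‖ ≤ (n : ℝ) ^ (1 - β) / (1 - β) := by
  refine (norm_sum_le_of_le _ fun j hj => ?_).trans (sum_Icc_rpow_neg_le hβ0 hβ1 n)
  have hc := mul_nonneg (Nat.cast_nonneg (α := ℝ) j) (ccoef.nonneg hβ0 hβ1.le j)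
  rw [norm_smul, norm_pow, Real.norm_of_nonneg hc]
  calc _ ≤ (j : ℝ) * ccoef β j * 1 := by gcongr; exact pow_le_one₀ (norm_nonneg z) hz
    _ ≤ _ := by rw [mul_one]; exact ccoef.natCast_mul_le_rpow hβ0 hβ1.le (mem_Icc.1 hj).1

lemma norm_sum_natCast_mul_ccoef_smul_pow_le_of_ne_one (hβ0 : 0 ≤ β) (hβ1 : β < 1)
    (hz : ‖z‖ ≤ 1) (hz1 : z ≠ 1) (N n : ℕ) :
    ‖∑ j ∈ Icc 1 n, ((j : ℝ) * ccoef β j) • z ^ j‖ ≤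
      (N : ℝ) ^ (1 - β) / (1 - β) + 4 * (N + 1 : ℝ) ^ (-β) / ‖z - 1‖ := by
  rcases le_or_gt n N with hnN | hNn
  · refine (norm_sum_natCast_mul_ccoef_smul_pow_le hβ0 hβ1 hz n).trans ?_
    refine le_add_of_le_of_nonneg ?_ (by positivity)
    gcongr
  have hcoef : AntitoneOn (fun j : ℕ => (j : ℝ) * ccoef β j) (Set.Ici (N + 1)) :=
    (ccoef.antitoneOn_natCast_mul hβ0 hβ1.le).mono (Set.Ici_subset_Ici.2 (by omega))
  have htail := Finset.norm_sum_Ico_smul_le_of_antitoneOn (n := n + 1) hcoef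
    (fun i _ => mul_nonneg (Nat.cast_nonneg i) (ccoef.nonneg hβ0 hβ1.le i))
    (norm_geom_sum_le hz hz1)
  have hfirst := ccoef.natCast_mul_le_rpow hβ0 hβ1.le (Nat.le_add_left 1 N)
  rw [← Ico_add_one_right_eq_Icc, ← sum_Ico_consecutive _ (by omega : 1 ≤ N + 1)
    (by omega : N + 1 ≤ n + 1), Ico_add_one_right_eq_Icc]
  refine (norm_add_le _ _).trans (add_le_add
    (norm_sum_natCast_mul_ccoef_smul_pow_le hβ0 hβ1 hz N) (htail.trans ?_))
  push_cast at hfirst ⊢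
  calc _ ≤ 2 * (2 / ‖z - 1‖) * (N + 1 : ℝ) ^ (-β) := by gcongr
    _ = _ := by ring

open Real in
lemma norm_sum_natCast_mul_ccoef_smul_exp_pow_le (hβ0 : 0 ≤ β) (hβ1 : β < 1) {θ : ℝ}
    (hθ0 : 0 < |θ|) (hθ : |θ| ≤ π) (n : ℕ) :
    ‖∑ j ∈ Icc 1 n, ((j : ℝ) * ccoef β j) • Complex.exp (Complex.I * θ) ^ j‖ ≤
      (1 / (1 - β) + 2 * π) * |θ| ^ (β - 1) := by
  have hβ : 0 < 1 - β := by linarith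
  have hlow := mul_abs_le_norm_exp_I_mul_sub_one hθ
  have hd : 0 < ‖Complex.exp (Complex.I * θ) - 1‖ := lt_of_lt_of_le (by positivity) hlow
  set N := ⌊|θ|⁻¹⌋₊
  have hhead : (N : ℝ) ^ (1 - β) ≤ |θ| ^ (β - 1) := by
    calc (N : ℝ) ^ (1 - β) ≤ (|θ|⁻¹) ^ (1 - β) :=
          rpow_le_rpow (Nat.cast_nonneg N) (Nat.floor_le (by positivity)) hβ.le
      _ = |θ| ^ (β - 1) := by rw [inv_rpow (abs_nonneg θ), ← rpow_neg (abs_nonneg θ), neg_sub]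
  have htail : (N + 1 : ℝ) ^ (-β) ≤ |θ| ^ (β - 1) * |θ| := by
    calc (N + 1 : ℝ) ^ (-β) ≤ (|θ|⁻¹) ^ (-β) :=
          rpow_le_rpow_of_nonpos (by positivity) (Nat.lt_floor_add_one _).le (by linarith)
      _ = |θ| ^ (β - 1) * |θ| := by
          rw [inv_rpow (abs_nonneg θ), rpow_neg (abs_nonneg θ), inv_inv,
            rpow_sub_one hθ0.ne', div_mul_cancel₀ _ hθ0.ne']
  refine (norm_sum_natCast_mul_ccoef_smul_pow_le_of_ne_one hβ0 hβ1
    (Complex.norm_exp_I_mul_ofReal θ).le (sub_ne_zero.1 (norm_pos_iff.1 hd)) N n).trans ?_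
  calc _ ≤ |θ| ^ (β - 1) / (1 - β) + 4 * (|θ| ^ (β - 1) * |θ|) / (2 / π * |θ|) := by
        gcongr
    _ = _ := by field_simp; ring

end PowerSum

/-- bounds on the `θ`-derivative of `A_n(e^{iθ})`, i.e. on
`Σ_{j=1}^n j c_j e^{ijθ}`. -/
theorem An_derivative_bound (β : ℝ) (hβ : β ∈ Set.Ioo (0 : ℝ) 1) :
    ∃ υ > (0 : ℝ), ∃ C > (0 : ℝ), ∀ n : ℕ, 1 ≤ n →
      (∀ θ : ℝ, 0.01 * (n : ℝ)⁻¹ < |θ| → |θ| < υ →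
        ‖∑ j ∈ Finset.Icc 1 n, (j : ℂ) * (ccoef β j : ℂ) *
            Complex.exp (Complex.I * (j : ℂ) * (θ : ℂ))‖ ≤ C * |θ| ^ (β - 1)) ∧
      (∀ θ : ℝ, |θ| ≤ 0.01 * (n : ℝ)⁻¹ →
        ‖∑ j ∈ Finset.Icc 1 n, (j : ℂ) * (ccoef β j : ℂ) *
            Complex.exp (Complex.I * (j : ℂ) * (θ : ℂ))‖ ≤ C * (n : ℝ) ^ (1 - β)) := by
  obtain ⟨hβ0, hβ1⟩ := hβ
  have hsum : ∀ (θ : ℝ) (n : ℕ), ∑ j ∈ Icc 1 n, (j : ℂ) * (ccoef β j : ℂ) *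
      Complex.exp (Complex.I * (j : ℂ) * (θ : ℂ)) =
      ∑ j ∈ Icc 1 n, ((j : ℝ) * ccoef β j) • Complex.exp (Complex.I * θ) ^ j :=
    fun θ n => sum_congr rfl fun j _ => by
      rw [Complex.real_smul, ← Complex.exp_nat_mul]
      push_cast
      ring_nf
  have hβ : 0 < 1 - β := by linarith
  refine ⟨Real.pi, Real.pi_pos, 1 / (1 - β) + 2 * Real.pi, by positivity,
    fun n _ => ⟨fun θ hθ0 hθ => ?_, fun θ _ => ?_⟩⟩
  · rw [hsum]
    exact norm_sum_natCast_mul_ccoef_smul_exp_pow_le hβ0.le hβ1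
      ((by positivity : (0 : ℝ) ≤ 0.01 * (n : ℝ)⁻¹).trans_lt hθ0) hθ.le n
  · rw [hsum]
    refine (norm_sum_natCast_mul_ccoef_smul_pow_le hβ0.le hβ1
      (Complex.norm_exp_I_mul_ofReal θ).le n).trans ?_
    rw [div_eq_mul_one_div, mul_comm]
    gcongr
    linarith [Real.pi_pos]
end
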